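/- arXiv:2501.12120 — 13 statements merged into one kernel-verified Lean document; each statement's English description precedes it below -/
import Mathlib

section
/- Let X be a metric space, I : X → X a map satisfying dist(I a, I b) = dist(a, b) for all a, b, and suppose there exist a point v₀ ∈ X and a strictly increasing sequence of natural numbers (r_n) with dist(I^[r_n](v₀), v₀) → 0 as n → ∞. Then for every v ∈ X, dist(I^[n](v), v)/n → 0 as n → ∞; that is, I has zero drift. -/
/-- **A recurrent distance-preserving map has zero drift.**
If `I : X → X` preserves distances and there is a point `v₀` and a strictly increasing
sequence `r` with `dist (I^[r n] v₀) v₀ → 0`, then `dist (I^[n] v) v / n → 0` for every `v`. -/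
theorem recurrent_isometry_zero_drift {X : Type*} [MetricSpace X] (I : X → X)
    (hI : ∀ a b : X, dist (I a) (I b) = dist a b)
    (v₀ : X) (r : ℕ → ℕ) (hr : StrictMono r)
    (hrec : Filter.Tendsto (fun n : ℕ => dist (I^[r n] v₀) v₀) Filter.atTop (nhds 0)) :
    ∀ v : X, Filter.Tendsto (fun n : ℕ => dist (I^[n] v) v / n) Filter.atTop (nhds 0) := by
  have hIn : ∀ n (a b : X), dist (I^[n] a) (I^[n] b) = dist a b := by
    intro n
    induction n with
    | zero => simp
    | succ k ih =>
      intro a b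
      rw [Function.iterate_succ_apply', Function.iterate_succ_apply', hI]
      exact ih a b
  set u : ℕ → ℝ := fun n => dist (I^[n] v₀) v₀ with hu
  have hsub : Subadditive u := by
    intro m n
    calc u (m + n) ≤ dist (I^[m + n] v₀) (I^[n] v₀) + dist (I^[n] v₀) v₀ := dist_triangle _ _ _
    _ = u m + u n := by rw [add_comm m n, Function.iterate_add_apply, hIn n]
  have hbdd : BddBelow (Set.range fun n : ℕ => u n / n) := by
    refine ⟨0, ?_⟩
    rintro x ⟨n, rfl⟩
    positivity
  have hrpos : ∀ n : ℕ, 1 ≤ n → r n ≠ 0 := fun n hn => by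
    have : n ≤ r n := hr.le_apply; omega
  have hlim0 : hsub.lim = 0 := by
    apply le_antisymm
    · -- lim ≤ u (r n) / (r n) ≤ u (r n) → 0
      have key : Filter.Tendsto (fun n : ℕ => u (r n) / (r n)) Filter.atTop (nhds 0) := by
        apply squeeze_zero (fun n => by positivity) (g := fun n => u (r n))
        · intro n
          rcases Nat.eq_zero_or_pos (r n) with h | h
          · simp [h]
            exact dist_nonneg
          · apply div_le_self (by positivity)
            exact_mod_cast h
        · exact hrec
      refine ge_of_tendsto key ?_
      filter_upwards [Filter.eventually_ge_atTop 1] with n hn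
      exact hsub.lim_le_div hbdd (hrpos n hn)
    · rw [Subadditive.lim]
      refine le_csInf ⟨_, Set.mem_image_of_mem _ (Set.mem_Ici.2 (le_refl 1))⟩ ?_
      rintro b ⟨n, hn, rfl⟩
      positivity
  have hu0 : Filter.Tendsto (fun n : ℕ => u n / n) Filter.atTop (nhds 0) := by
    have := hsub.tendsto_lim hbdd
    rwa [hlim0] at this
  intro v
  apply squeeze_zero (fun n => by positivity) (g := fun n : ℕ => u n / n + 2 * dist v v₀ / n)
  · intro n
    have h1 : dist (I^[n] v) v ≤ u n + 2 * dist v v₀ := by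
      calc dist (I^[n] v) v ≤ dist (I^[n] v) (I^[n] v₀) + dist (I^[n] v₀) v₀ + dist v₀ v :=
            dist_triangle4 _ _ _ _
        _ = dist v v₀ + u n + dist v₀ v := by rw [hIn]
        _ = u n + 2 * dist v v₀ := by rw [dist_comm v₀ v]; ring
    rcases Nat.eq_zero_or_pos n with h | h
    · simp [h]
    · rw [← add_div]
      gcongr
  · have h2 : Filter.Tendsto (fun n : ℕ => 2 * dist v v₀ / n) Filter.atTop (nhds 0) :=
      tendsto_const_div_atTop_nhds_zero_nat _
    simpa using hu0.add h2
end

section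
/- Let E be a finite-dimensional real inner product space, Θ : E ≃ₗᵢ E a linear isometric equivalence, and c ∈ E. Define the affine isometry I : E → E by I(v) = Θ(v) + c, and let c* be the orthogonal projection of c onto the subspace Fix(Θ) = {u ∈ E : Θ(u) = u}. Then for every v ∈ E, (1/n) • I^[n](v) → c* as n → ∞. -/
/-- **Asymptotic translation vector of an affine isometry in finite dimension.**
For an affine isometry `I v = Θ v + c` of a finite-dimensional real inner product space,
`I^[n] v / n` converges to the orthogonal projection `c*` of `c` onto the subspace of
fixed vectors of `Θ`. -/
theorem affine_isometry_iterates_tendsto_projection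
    {E : Type*} [NormedAddCommGroup E] [InnerProductSpace ℝ E] [FiniteDimensional ℝ E]
    (Θ : E ≃ₗᵢ[ℝ] E) (c : E) (I : E → E) (hI : ∀ v, I v = Θ v + c)
    (Fix : Submodule ℝ E) (hFix : ∀ u : E, u ∈ Fix ↔ Θ u = u) :
    ∀ v : E, Filter.Tendsto (fun n : ℕ => (n : ℝ)⁻¹ • I^[n] v) Filter.atTop
      (nhds (Fix.orthogonalProjectionOnto c : E)) := by
  intro v
  set f : E →L[ℝ] E := Θ.toLinearIsometry.toContinuousLinearMap with hf
  have hfc : ⇑f = ⇑Θ := rfl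
  have hnorm : ‖f‖ ≤ 1 := f.opNorm_le_bound zero_le_one (fun x => by
    simp [hfc, Θ.norm_map])
  have hFixEq : Fix = LinearMap.eqLocus (f : E →ₗ[ℝ] E) 1 := by
    ext u
    simp [hFix, LinearMap.mem_eqLocus, hfc]
  -- decomposition of iterates
  have hiter : ∀ n : ℕ, I^[n] v = Θ^[n] v + birkhoffSum Θ _root_.id n c := by
    intro n
    induction n with
    | zero => simp [birkhoffSum]
    | succ n ih =>
        have key : Θ (birkhoffSum Θ _root_.id n c) = birkhoffSum Θ _root_.id n (Θ c) := by
          simp only [birkhoffSum, map_sum, _root_.id]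
          exact Finset.sum_congr rfl fun k _ =>
            (Function.iterate_succ_apply' (⇑Θ) k c).symm.trans
              (Function.iterate_succ_apply (⇑Θ) k c)
        rw [Function.iterate_succ_apply', ih, hI, map_add, key,
          Function.iterate_succ_apply' (⇑Θ), birkhoffSum_succ']
        simp only [_root_.id]
        abel
  have h1 : Filter.Tendsto (fun n : ℕ => (n : ℝ)⁻¹ • Θ^[n] v) Filter.atTop (nhds 0) := by
    have : Filter.Tendsto (fun n : ℕ => ‖v‖ * (n : ℝ)⁻¹) Filter.atTop (nhds 0) := by
      simpa using tendsto_const_nhds.mul (tendsto_inv_atTop_nhds_zero_nat (𝕜 := ℝ))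
    refine squeeze_zero_norm (fun n => ?_) this
    have hnv : ‖Θ^[n] v‖ = ‖v‖ := by
      induction n with
      | zero => rfl
      | succ n ih => rw [Function.iterate_succ_apply', Θ.norm_map, ih]
    rw [norm_smul, hnv, norm_inv, Real.norm_natCast, mul_comm]
  have h2 : Filter.Tendsto (fun n : ℕ => birkhoffAverage ℝ f _root_.id n c) Filter.atTop
      (nhds (Fix.orthogonalProjectionOnto c : E)) := by
    have := f.tendsto_birkhoffAverage_orthogonalProjection (𝕜 := ℝ) hnorm c
    rw [hFixEq]
    exact this
  have := h1.add h2
  simp only [zero_add] at this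
  refine this.congr fun n => ?_
  rw [hiter n, smul_add]
  rfl
end

section
/- Let E be a finite-dimensional real inner product space, Θ : E ≃ₗᵢ E a linear isometric equivalence, and c ∈ E. Define the affine isometry I : E → E by I(v) = Θ(v) + c. If ‖I^[n](0)‖/n → 0 as n → ∞ (i.e., I has zero drift), then I has a fixed point: there exists v ∈ E with Θ(v) + c = v. -/
open Filter
open scoped RealInnerProductSpace

/-- **Finite-dimensional dichotomy: zero drift implies a fixed point.**
An affine isometry `I v = Θ v + c` of a finite-dimensional real inner product space with
zero drift (`‖I^[n] 0‖ / n → 0`) has a fixed point. -/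
theorem affine_isometry_zero_drift_has_fixed_point
    {E : Type*} [NormedAddCommGroup E] [InnerProductSpace ℝ E] [FiniteDimensional ℝ E]
    (Θ : E ≃ₗᵢ[ℝ] E) (c : E) (I : E → E) (hI : ∀ v, I v = Θ v + c)
    (hdrift : Filter.Tendsto (fun n : ℕ => ‖I^[n] (0 : E)‖ / n) Filter.atTop (nhds 0)) :
    ∃ v : E, Θ v + c = v := by
  set T : E →ₗ[ℝ] E := LinearMap.id - (Θ.toLinearEquiv : E →ₗ[ℝ] E) with hT
  have hTapp : ∀ x, T x = x - Θ x := fun x => rfl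
  have key : ∀ w, Θ w = w → ∀ n : ℕ, ⟪I^[n] (0:E), w⟫ = n * ⟪c, w⟫ := by
    intro w hw n
    induction n with
    | zero => simp
    | succ n ih =>
      rw [Function.iterate_succ_apply', hI, inner_add_left]
      have h1 : ⟪Θ (I^[n] (0:E)), w⟫ = ⟪I^[n] (0:E), w⟫ := by
        conv_lhs => rw [← hw]
        exact Θ.inner_map_map _ _
      rw [h1, ih]; push_cast; ring
  have hcK : ∀ w, Θ w = w → ⟪c, w⟫ = 0 := by
    intro w hw
    have h1 : Tendsto (fun n : ℕ => ‖I^[n] (0:E)‖ / n * ‖w‖) atTop (nhds 0) := by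
      simpa using hdrift.mul_const ‖w‖
    have h2 : ∀ᶠ n : ℕ in atTop, |⟪c, w⟫| ≤ ‖I^[n] (0:E)‖ / n * ‖w‖ := by
      filter_upwards [eventually_ge_atTop 1] with n hn
      have hn0 : (0:ℝ) < n := by exact_mod_cast hn
      have hcs : |⟪I^[n] (0:E), w⟫| ≤ ‖I^[n] (0:E)‖ * ‖w‖ := abs_real_inner_le_norm _ _
      rw [key w hw n, abs_mul, abs_of_pos hn0] at hcs
      calc |⟪c, w⟫| = (n : ℝ) * |⟪c, w⟫| / n := by field_simp
        _ ≤ ‖I^[n] (0:E)‖ * ‖w‖ / n := by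
            exact div_le_div_of_nonneg_right hcs hn0.le
        _ = ‖I^[n] (0:E)‖ / n * ‖w‖ := by ring
    have : |⟪c, w⟫| ≤ 0 := le_of_tendsto_of_tendsto tendsto_const_nhds h1 h2
    exact abs_nonpos_iff.mp this
  have hker : ∀ w, w ∈ LinearMap.ker T ↔ Θ w = w := by
    intro w
    rw [LinearMap.mem_ker, hTapp, sub_eq_zero]
    exact ⟨fun h => h.symm, fun h => h.symm⟩
  have hle : LinearMap.range T ≤ (LinearMap.ker T)ᗮ := by
    rintro _ ⟨x, rfl⟩
    rw [Submodule.mem_orthogonal]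
    intro w hw
    have hw' : Θ w = w := (hker w).mp hw
    rw [hTapp, inner_sub_right]
    have : ⟪w, Θ x⟫ = ⟪w, x⟫ := by
      conv_lhs => rw [← hw']
      exact Θ.inner_map_map _ _
    rw [this, sub_self]
  have heq : LinearMap.range T = (LinearMap.ker T)ᗮ := by
    apply Submodule.eq_of_le_of_finrank_eq hle
    have h1 := Submodule.finrank_add_finrank_orthogonal (K := LinearMap.ker T)
    have h2 := LinearMap.finrank_range_add_finrank_ker T
    omega
  have hc : c ∈ LinearMap.range T := by
    rw [heq, Submodule.mem_orthogonal]
    intro u hu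
    rw [real_inner_comm]
    exact hcK u ((hker u).mp hu)
  obtain ⟨x, hx⟩ := hc
  refine ⟨x, ?_⟩
  rw [hTapp] at hx
  rw [← hx]; abel
end

section
/- Let I : (ℕ → ℂ) → (ℕ → ℂ) be Edelstein's map, defined coordinatewise by (I x)(n) = exp(2πi/(n+1)!)·(x(n) − 1) + 1. Then I maps the complex Hilbert space ℓ² = lp (fun _ : ℕ => ℂ) 2 into itself, it is a bijection of ℓ² onto itself, and it preserves distances: ‖I x − I y‖ = ‖x − y‖ for all x, y ∈ ℓ². -/
namespace EdelsteinAux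

open Complex Nat

noncomputable def c (n : ℕ) : ℂ :=
  Complex.exp (2 * Real.pi * Complex.I / (Nat.factorial (n + 1) : ℂ))

lemma c_eq (n : ℕ) : c n = Complex.exp (((2 * Real.pi / (Nat.factorial (n + 1) : ℝ)) : ℝ) * Complex.I) := by
  unfold c; congr 1; push_cast; ring

lemma norm_c (n : ℕ) : ‖c n‖ = 1 := by
  rw [c_eq, Complex.norm_exp_ofReal_mul_I]

lemma c_ne_zero (n : ℕ) : c n ≠ 0 := by
  intro h; simpa [h] using norm_c n

lemma summable_d : Summable (fun n : ℕ => ‖c n - 1‖ ^ (2 : ℝ)) := by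
  rw [← summable_nat_add_iff 3]
  have hsum : Summable (fun n : ℕ => (16 * Real.pi ^ 2) * (1 / (n ! : ℝ))) := by
    have := Real.summable_pow_div_factorial 1
    simpa using this.mul_left (16 * Real.pi ^ 2)
  refine Summable.of_nonneg_of_le (fun n => by positivity) (fun n => ?_) hsum
  set m := n + 3 with hm
  have hθpos : (0 : ℝ) < 2 * Real.pi / ((m + 1)! : ℝ) := by
    have : (0 : ℝ) < ((m + 1)! : ℝ) := by positivity
    positivity
  set θ : ℝ := 2 * Real.pi / ((m + 1)! : ℝ) with hθ
  have hfact : (24 : ℝ) ≤ ((m + 1)! : ℝ) := by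
    have : (24 : ℕ) ≤ (m + 1)! := by
      calc (24 : ℕ) = (4)! := by norm_num [Nat.factorial]
      _ ≤ (m + 1)! := Nat.factorial_le (by omega)
    exact_mod_cast this
  have hθ1 : θ ≤ 1 := by
    rw [hθ, div_le_one (by linarith)]
    have := Real.pi_le_four
    linarith
  have habs : ‖((θ : ℂ) * Complex.I)‖ = θ := by
    simp [abs_of_pos hθpos]
  have hb : ‖c m - 1‖ ≤ 2 * θ := by
    rw [c_eq]
    have := Complex.norm_exp_sub_one_le (x := (θ : ℂ) * Complex.I) (by rw [habs]; exact hθ1)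
    rw [habs] at this
    simpa [hθ] using this
  have h0 : (0 : ℝ) ≤ ‖c m - 1‖ := norm_nonneg _
  have hsq : ‖c m - 1‖ ^ (2 : ℝ) ≤ (2 * θ) ^ (2 : ℝ) :=
    Real.rpow_le_rpow h0 hb (by norm_num)
  refine hsq.trans ?_
  rw [show ((2 : ℝ) * θ) ^ (2 : ℝ) = (2 * θ) ^ (2 : ℕ) from Real.rpow_natCast _ 2]
  have hfn : (n ! : ℝ) ≤ ((m + 1)! : ℝ) := by
    exact_mod_cast Nat.factorial_le (by omega)
  have hfn0 : (0 : ℝ) < (n ! : ℝ) := by positivity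
  have hf0 : (0 : ℝ) < ((m + 1)! : ℝ) := by positivity
  have key : (2 * θ) ^ 2 = 16 * Real.pi ^ 2 / ((m + 1)! : ℝ) ^ 2 := by
    rw [hθ]; field_simp; ring
  rw [key]
  have h1 : ((m + 1)! : ℝ) ≤ ((m + 1)! : ℝ) ^ 2 := by
    nlinarith [hfact]
  have h2 : 16 * Real.pi ^ 2 / ((m + 1)! : ℝ) ^ 2 ≤ 16 * Real.pi ^ 2 / ((m + 1)! : ℝ) := by
    apply div_le_div_of_nonneg_left (by positivity) hf0 h1
  calc 16 * Real.pi ^ 2 / ((m + 1)! : ℝ) ^ 2 ≤ 16 * Real.pi ^ 2 / ((m + 1)! : ℝ) := h2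
    _ ≤ 16 * Real.pi ^ 2 / (n ! : ℝ) := by
        apply div_le_div_of_nonneg_left (by positivity) hfn0 hfn
    _ = 16 * Real.pi ^ 2 * (1 / (n ! : ℝ)) := by ring

lemma htoReal : ((2 : ENNReal).toReal) = (2 : ℝ) := by norm_num

lemma mem_aff (u : ℕ → ℂ) (hu : ∀ n, ‖u n‖ = 1)
    (hd : Summable (fun n => ‖u n - 1‖ ^ (2 : ℝ)))
    (x : ℕ → ℂ) (hx : Memℓp x 2) :
    Memℓp (fun n => u n * (x n - 1) + 1) 2 := by
  have h1 : Memℓp (fun n => u n * x n) 2 := by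
    apply memℓp_gen
    rw [htoReal]
    have := hx.summable (by rw [htoReal]; norm_num)
    rw [htoReal] at this
    refine this.congr fun n => ?_
    rw [norm_mul, hu n, one_mul]
  have h2 : Memℓp (fun n => (1 : ℂ) - u n) 2 := by
    apply memℓp_gen
    rw [htoReal]
    refine hd.congr fun n => ?_
    rw [norm_sub_rev]
  have hfun : (fun n => u n * (x n - 1) + 1) = (fun n => u n * x n) + fun n => (1 : ℂ) - u n := by
    funext n; simp only [Pi.add_apply]; ring
  rw [hfun]
  exact h1.add h2

end EdelsteinAux

open EdelsteinAux in
/-- **Edelstein's map is a well-defined bijective isometry of `ℓ²`.**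
The coordinatewise map `(I x) n = exp(2πi/(n+1)!) * (x n - 1) + 1` maps `ℓ²` into itself,
induces a bijection of `ℓ²`, and preserves distances. -/
theorem edelstein_isometry_of_l2
    (J : (ℕ → ℂ) → (ℕ → ℂ))
    (hJ : ∀ (x : ℕ → ℂ) (n : ℕ),
      J x n = Complex.exp (2 * Real.pi * Complex.I / (Nat.factorial (n + 1) : ℂ)) * (x n - 1) + 1) :
    (∀ x : lp (fun _ : ℕ => ℂ) 2, Memℓp (J (x : ℕ → ℂ)) 2) ∧
    ∃ Ihat : lp (fun _ : ℕ => ℂ) 2 → lp (fun _ : ℕ => ℂ) 2,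
      (∀ x : lp (fun _ : ℕ => ℂ) 2, (Ihat x : ℕ → ℂ) = J (x : ℕ → ℂ)) ∧
      Function.Bijective Ihat ∧
      ∀ x y : lp (fun _ : ℕ => ℂ) 2, ‖Ihat x - Ihat y‖ = ‖x - y‖ := by
  have hJc : ∀ (x : ℕ → ℂ), J x = fun n => c n * (x n - 1) + 1 := by
    intro x; funext n; rw [hJ]; rfl
  -- inverse coefficient
  have hu' : ∀ n, ‖(c n)⁻¹‖ = 1 := fun n => by
    rw [norm_inv, norm_c]; norm_num
  have hd' : Summable (fun n => ‖(c n)⁻¹ - 1‖ ^ (2 : ℝ)) := by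
    refine summable_d.congr fun n => ?_
    congr 1
    have : (c n)⁻¹ - 1 = (1 - c n) * (c n)⁻¹ := by
      rw [sub_mul, one_mul, mul_inv_cancel₀ (c_ne_zero n)]
    rw [this, norm_mul, norm_inv, norm_c, norm_sub_rev]
    norm_num
  have hmem : ∀ x : lp (fun _ : ℕ => ℂ) 2, Memℓp (J (x : ℕ → ℂ)) 2 := by
    intro x
    rw [hJc]
    exact mem_aff c norm_c summable_d _ (lp.memℓp x)
  refine ⟨hmem, ?_⟩
  set Ihat : lp (fun _ : ℕ => ℂ) 2 → lp (fun _ : ℕ => ℂ) 2 :=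
    fun x => ⟨fun n => c n * (x n - 1) + 1, mem_aff c norm_c summable_d _ (lp.memℓp x)⟩ with hI
  set Khat : lp (fun _ : ℕ => ℂ) 2 → lp (fun _ : ℕ => ℂ) 2 :=
    fun x => ⟨fun n => (c n)⁻¹ * (x n - 1) + 1, mem_aff _ hu' hd' _ (lp.memℓp x)⟩ with hK
  have hIcoe : ∀ x : lp (fun _ : ℕ => ℂ) 2, ((Ihat x : ℕ → ℂ)) = fun n => c n * ((x : ℕ → ℂ) n - 1) + 1 :=
    fun x => rfl
  have hKcoe : ∀ x : lp (fun _ : ℕ => ℂ) 2, ((Khat x : ℕ → ℂ)) = fun n => (c n)⁻¹ * ((x : ℕ → ℂ) n - 1) + 1 :=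
    fun x => rfl
  have hKI : ∀ x, Khat (Ihat x) = x := by
    intro x
    apply lp.ext
    rw [hKcoe, hIcoe]
    funext n
    have hcn := c_ne_zero n
    field_simp
    ring
  have hIK : ∀ x, Ihat (Khat x) = x := by
    intro x
    apply lp.ext
    rw [hIcoe, hKcoe]
    funext n
    have hcn := c_ne_zero n
    field_simp
    ring
  refine ⟨Ihat, ?_, Function.bijective_iff_has_inverse.mpr ⟨Khat, hKI, hIK⟩, ?_⟩
  · intro x; rw [hIcoe, hJc]
  · intro x y
    have hp : 0 < ((2 : ENNReal).toReal) := by rw [htoReal]; norm_num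
    have hcoord : ∀ n : ℕ, ‖(Ihat x - Ihat y : lp (fun _ : ℕ => ℂ) 2) n‖ = ‖(x - y : lp (fun _ : ℕ => ℂ) 2) n‖ := by
      intro n
      rw [lp.coeFn_sub, lp.coeFn_sub]
      simp only [Pi.sub_apply]
      have : c n * ((x : ℕ → ℂ) n - 1) + 1 - (c n * ((y : ℕ → ℂ) n - 1) + 1)
          = c n * ((x : ℕ → ℂ) n - (y : ℕ → ℂ) n) := by ring
      show ‖c n * ((x : ℕ → ℂ) n - 1) + 1 - (c n * ((y : ℕ → ℂ) n - 1) + 1)‖ = ‖(x : ℕ → ℂ) n - (y : ℕ → ℂ) n‖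
      rw [this, norm_mul, norm_c, one_mul]
    rw [lp.norm_eq_tsum_rpow hp, lp.norm_eq_tsum_rpow hp]
    congr 1
    exact tsum_congr fun n => by rw [hcoord]
end

section
/- Edelstein's map I, defined coordinatewise on ℓ² = lp (fun _ : ℕ => ℂ) 2 by (I x)(n) = exp(2πi/(n+1)!)·(x(n) − 1) + 1, has no fixed point: there is no x ∈ ℓ² with I x = x. -/
theorem edelstein_aux (n : ℕ) :
    Complex.exp (2 * Real.pi * Complex.I / (Nat.factorial (n + 2) : ℂ)) ≠ 1 := by
  intro h
  rw [Complex.exp_eq_one_iff] at h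
  obtain ⟨k, hk⟩ := h
  have h2pi : (2 * Real.pi * Complex.I) ≠ 0 := by
    simp [Real.pi_ne_zero, Complex.I_ne_zero]
  have hfac : ((Nat.factorial (n + 2) : ℂ)) ≠ 0 :=
    Nat.cast_ne_zero.mpr (Nat.factorial_ne_zero _)
  have hc : (k : ℂ) * (Nat.factorial (n + 2) : ℂ) = 1 := by
    field_simp at hk
    have := mul_left_cancel₀ h2pi (by linear_combination (-(2 * Real.pi * Complex.I)) * hk :
      (2 * Real.pi * Complex.I) * ((k : ℂ) * (Nat.factorial (n + 2) : ℂ)) =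
        (2 * Real.pi * Complex.I) * 1)
    linear_combination this
  have hz : k * (Nat.factorial (n + 2) : ℤ) = 1 := by exact_mod_cast hc
  have hdvd : (Nat.factorial (n + 2) : ℤ) ∣ 1 := ⟨k, by linarith [hz]⟩
  have hle : (Nat.factorial (n + 2) : ℤ) ≤ 1 := Int.le_of_dvd one_pos hdvd
  have hge : 2 ≤ (Nat.factorial (n + 2) : ℤ) := by
    exact_mod_cast Nat.succ_le_of_lt (Nat.one_lt_factorial.mpr (by omega))
  omega

/-- **Edelstein's map has no fixed point in `ℓ²`.**
There is no `x ∈ ℓ²` with `exp(2πi/(n+1)!) * (x n - 1) + 1 = x n` for every `n`. -/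
theorem edelstein_no_fixed_point :
    ¬ ∃ x : lp (fun _ : ℕ => ℂ) 2, ∀ n : ℕ,
      Complex.exp (2 * Real.pi * Complex.I / (Nat.factorial (n + 1) : ℂ)) * ((x : ℕ → ℂ) n - 1) + 1
        = (x : ℕ → ℂ) n := by
  rintro ⟨x, hx⟩
  have hone : ∀ n : ℕ, (x : ℕ → ℂ) (n + 1) = 1 := by
    intro n
    have h := hx (n + 1)
    have he := edelstein_aux n
    have h0 : (Complex.exp (2 * Real.pi * Complex.I / (Nat.factorial (n + 2) : ℂ)) - 1) *
        ((x : ℕ → ℂ) (n + 1) - 1) = 0 := by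
      have hnn : (n + 1 + 1) = n + 2 := rfl
      rw [hnn] at h
      linear_combination h
    rcases mul_eq_zero.mp h0 with h1 | h2
    · exact absurd (by linear_combination h1) he
    · linear_combination h2
  have hmem : Memℓp (x : ℕ → ℂ) 2 := lp.memℓp x
  have hsum : Summable fun m : ℕ => ‖(x : ℕ → ℂ) m‖ ^ (2 : ENNReal).toReal :=
    hmem.summable (by norm_num)
  have htend := hsum.tendsto_atTop_zero
  have hev : ∀ᶠ m : ℕ in Filter.atTop, ‖(x : ℕ → ℂ) m‖ ^ (2 : ENNReal).toReal < 1 :=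
    htend.eventually_lt_const (by norm_num)
  obtain ⟨m, hm⟩ := (hev.and (Filter.eventually_ge_atTop 1)).exists
  obtain ⟨h1, h2⟩ := hm
  obtain ⟨j, rfl⟩ : ∃ j, m = j + 1 := ⟨m - 1, by omega⟩
  rw [hone j] at h1
  norm_num at h1
end

section
/- Edelstein's map I on ℓ² = lp (fun _ : ℕ => ℂ) 2, defined coordinatewise by (I x)(n) = exp(2πi/(n+1)!)·(x(n) − 1) + 1, is recurrent along factorials: for every x ∈ ℓ², ‖I^[n!](x) − x‖ → 0 as n → ∞. -/
private lemma edelstein_fact_aux (k : ℕ) : ∀ n, k ≤ n →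
    (k+1).factorial * 2 ^ (n - k) ≤ (n+1).factorial := by
  intro n hn
  induction n, hn using Nat.le_induction with
  | base => simp
  | succ n hn ih =>
    have h1 : n + 1 - k = (n - k) + 1 := by omega
    rw [h1, pow_succ, ← mul_assoc]
    calc (k+1).factorial * 2 ^ (n-k) * 2 ≤ (n+1).factorial * 2 :=
          Nat.mul_le_mul_right _ ih
      _ ≤ (n+1).factorial * (n+2) := by
          exact Nat.mul_le_mul_left _ (by omega)
      _ = (n+1+1).factorial := by
          simp [Nat.factorial_succ]; ring

private lemma edelstein_exp_aux (t : ℝ) :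
    ‖Complex.exp (t * Complex.I) - 1‖ ≤ |t| := by
  have h1 : Complex.exp (t * Complex.I) - 1
      = Complex.ofReal (Real.cos t - 1) + Complex.ofReal (Real.sin t) * Complex.I := by
    rw [Complex.exp_mul_I]
    push_cast [Complex.ofReal_cos, Complex.ofReal_sin]
    ring
  rw [h1, Complex.norm_def, Complex.normSq_add_mul_I]
  have h2 : Real.sin (t/2) ^ 2 ≤ (t/2) ^ 2 := by
    have := Real.abs_sin_le_abs (x := t/2)
    nlinarith [abs_nonneg (Real.sin (t/2)), abs_nonneg (t/2),
      sq_abs (Real.sin (t/2)), sq_abs (t/2)]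
  have h3 : (Real.cos t - 1) ^ 2 + Real.sin t ^ 2 ≤ t ^ 2 := by
    have hc : Real.cos t = 1 - 2 * Real.sin (t/2) ^ 2 := by
      have := Real.cos_two_mul (t/2)
      have hs := Real.sin_sq_add_cos_sq (t/2)
      have ht : 2 * (t/2) = t := by ring
      rw [ht] at this
      nlinarith
    have hpyth := Real.sin_sq_add_cos_sq t
    nlinarith
  calc Real.sqrt ((Real.cos t - 1) ^ 2 + Real.sin t ^ 2)
      ≤ Real.sqrt (t ^ 2) := Real.sqrt_le_sqrt h3
    _ = |t| := Real.sqrt_sq_eq_abs t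

set_option maxHeartbeats 1000000 in
/-- **Edelstein's map is recurrent along the factorials.**
If `Ihat` is Edelstein's isometry of `ℓ²`, given coordinatewise by
`(Ihat x) n = exp(2πi/(n+1)!) * (x n - 1) + 1`, then `‖Ihat^[n!] x - x‖ → 0` for every `x`. -/
theorem edelstein_recurrent
    (Ihat : lp (fun _ : ℕ => ℂ) 2 → lp (fun _ : ℕ => ℂ) 2)
    (hI : ∀ (x : lp (fun _ : ℕ => ℂ) 2) (n : ℕ),
      (Ihat x : ℕ → ℂ) n
        = Complex.exp (2 * Real.pi * Complex.I / (Nat.factorial (n + 1) : ℂ))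
            * ((x : ℕ → ℂ) n - 1) + 1) :
    ∀ x : lp (fun _ : ℕ => ℂ) 2,
      Filter.Tendsto (fun n : ℕ => ‖Ihat^[Nat.factorial n] x - x‖) Filter.atTop (nhds 0) := by
  intro x
  set π := Real.pi with hπdef
  have hπ : (0:ℝ) < π := Real.pi_pos
  -- coordinates of iterates
  have hiter : ∀ (m : ℕ) (i : ℕ),
      ((Ihat^[m] x : lp (fun _ : ℕ => ℂ) 2) : ℕ → ℂ) i
        = Complex.exp (2 * π * Complex.I / (Nat.factorial (i + 1) : ℂ)) ^ m
            * ((x : ℕ → ℂ) i - 1) + 1 := by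
    intro m
    induction m with
    | zero => intro i; simp
    | succ m ih =>
      intro i
      rw [Function.iterate_succ_apply', hI, ih]
      ring
  -- key coordinate bound for the k!-th iterate
  set D : ℝ := 8 * π ^ 2 * (‖x‖ ^ 2 + 2) with hD
  have hDpos : 0 < D := by positivity
  have hbd : ∀ k : ℕ, ∀ i : ℕ,
      ‖Complex.exp (2 * π * Complex.I / (Nat.factorial (i + 1) : ℂ)) ^ (Nat.factorial k) - 1‖
        ≤ (2 * π / (k + 1)) * (2⁻¹ : ℝ) ^ (i - k) := by
    intro k i
    have hfne : ((Nat.factorial (i+1) : ℂ)) ≠ 0 :=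
      Nat.cast_ne_zero.mpr (Nat.factorial_ne_zero _)
    rw [← Complex.exp_nat_mul]
    rcases lt_or_ge i k with hik | hik
    · -- exp is exactly 1
      have hdvd : Nat.factorial (i+1) ∣ Nat.factorial k :=
        Nat.factorial_dvd_factorial (by omega)
      obtain ⟨c, hc⟩ := hdvd
      have : ((Nat.factorial k : ℂ)) * (2 * π * Complex.I / (Nat.factorial (i + 1) : ℂ))
          = (c : ℤ) * (2 * π * Complex.I) := by
        field_simp
        push_cast [hc]
        ring
      rw [this, Complex.exp_int_mul_two_pi_mul_I]
      simp [le_of_lt, mul_nonneg, pow_nonneg]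
      positivity
    · -- exp(it) with t small
      set t : ℝ := 2 * π * (Nat.factorial k : ℝ) / (Nat.factorial (i+1) : ℝ) with ht
      have htpos : 0 < t := by positivity
      have harg : ((Nat.factorial k : ℂ)) * (2 * π * Complex.I / (Nat.factorial (i + 1) : ℂ))
          = (t : ℂ) * Complex.I := by
        rw [ht]
        push_cast
        field_simp
      rw [harg]
      refine (edelstein_exp_aux t).trans ?_
      rw [abs_of_pos htpos, ht]
      -- t = 2π k!/(i+1)! ≤ (2π/(k+1)) (1/2)^(i-k)
      have hnat := edelstein_fact_aux k i hik
      have h2 : (0:ℝ) < ((Nat.factorial (i+1) : ℝ)) := by positivity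
      have h3 : (0:ℝ) < ((k:ℝ) + 1) * 2 ^ (i - k) := by positivity
      rw [div_le_iff₀ h2]
      have hexp : (2 * π / (k + 1)) * (2⁻¹ : ℝ) ^ (i - k)
          = 2 * π / (((k:ℝ) + 1) * 2 ^ (i - k)) := by
        rw [inv_pow]
        field_simp
      rw [hexp, div_mul_eq_mul_div, le_div_iff₀ h3]
      have h4 := (Nat.cast_le (α := ℝ)).mpr hnat
      push_cast [Nat.factorial_succ] at h4 ⊢
      nlinarith [h4, hπ]
  -- norm bound for each k
  have hnorm : ∀ k : ℕ, ‖Ihat^[Nat.factorial k] x - x‖ ≤ Real.sqrt (D / (k + 1)) := by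
    intro k
    have hp : 0 < (2 : ENNReal).toReal := by norm_num
    refine lp.norm_le_of_forall_sum_le hp (Real.sqrt_nonneg _) ?_
    intro s
    have htoReal : (2 : ENNReal).toReal = (2:ℝ) := by norm_num
    rw [htoReal]
    have hCksq : Real.sqrt (D / (k + 1)) ^ (2:ℝ) = D / (k+1) := by
      rw [Real.rpow_two, Real.sq_sqrt (by positivity)]
    rw [hCksq]
    set Ck : ℝ := 2 * π / (k + 1) with hCk
    have hCkpos : 0 < Ck := by positivity
    set m : ℕ → ℝ := fun i => (2⁻¹ : ℝ) ^ (i - k) with hm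
    have hm01 : ∀ i, 0 ≤ m i ∧ m i ≤ 1 := fun i =>
      ⟨by positivity, pow_le_one₀ (by norm_num) (by norm_num)⟩
    -- pointwise bound on coordinates of the difference
    have hpt : ∀ i, ‖((Ihat^[Nat.factorial k] x - x : lp (fun _ : ℕ => ℂ) 2) : ℕ → ℂ) i‖
        ≤ Ck * ‖(x : ℕ → ℂ) i‖ + Ck * m i := by
      intro i
      have hco : ((Ihat^[Nat.factorial k] x - x : lp (fun _ : ℕ => ℂ) 2) : ℕ → ℂ) i
          = (Complex.exp (2 * π * Complex.I / (Nat.factorial (i + 1) : ℂ)) ^ (Nat.factorial k) - 1)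
              * ((x : ℕ → ℂ) i - 1) := by
        rw [lp.coeFn_sub, Pi.sub_apply, hiter]
        ring
      rw [hco, norm_mul]
      have h1 := hbd k i
      have h2 : ‖(x : ℕ → ℂ) i - 1‖ ≤ ‖(x : ℕ → ℂ) i‖ + 1 :=
        (norm_sub_le _ _).trans (by simp)
      have h3 : 0 ≤ ‖(x : ℕ → ℂ) i - 1‖ := norm_nonneg _
      have h4 : 0 ≤ ‖(x : ℕ → ℂ) i‖ := norm_nonneg _
      have h5 := (hm01 i).1
      have h6 := (hm01 i).2
      calc ‖Complex.exp (2 * π * Complex.I / (Nat.factorial (i + 1) : ℂ)) ^ (Nat.factorial k) - 1‖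
            * ‖(x : ℕ → ℂ) i - 1‖
          ≤ (Ck * m i) * (‖(x : ℕ → ℂ) i‖ + 1) := by
            exact mul_le_mul h1 h2 h3 (by positivity)
        _ ≤ Ck * ‖(x : ℕ → ℂ) i‖ + Ck * m i := by
            nlinarith [mul_nonneg (mul_nonneg hCkpos.le h4) (sub_nonneg.mpr h6)]
    -- sum the squares
    have hsq : ∀ i ∈ s,
        ‖((Ihat^[Nat.factorial k] x - x : lp (fun _ : ℕ => ℂ) 2) : ℕ → ℂ) i‖ ^ (2:ℝ)
        ≤ 2 * Ck^2 * ‖(x : ℕ → ℂ) i‖^2 + 2 * Ck^2 * (m i)^2 := by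
      intro i _
      rw [Real.rpow_two]
      have h1 := hpt i
      have h4 : 0 ≤ ‖(x : ℕ → ℂ) i‖ := norm_nonneg _
      have h0 : 0 ≤ ‖((Ihat^[Nat.factorial k] x - x : lp (fun _ : ℕ => ℂ) 2) : ℕ → ℂ) i‖ :=
        norm_nonneg _
      nlinarith [mul_self_le_mul_self h0 h1,
        sq_nonneg (Ck * ‖(x : ℕ → ℂ) i‖ - Ck * m i), (hm01 i).1,
        mul_nonneg hCkpos.le h4, mul_nonneg hCkpos.le (hm01 i).1]
    refine (Finset.sum_le_sum hsq).trans ?_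
    rw [Finset.sum_add_distrib, ← Finset.mul_sum, ← Finset.mul_sum]
    -- the x-part
    have hx2 : ∑ i ∈ s, ‖(x : ℕ → ℂ) i‖^2 ≤ ‖x‖^2 := by
      have := lp.sum_rpow_le_norm_rpow hp x s
      rw [htoReal] at this
      simpa [Real.rpow_two] using this
    -- the geometric part
    have hmsum : Summable (fun i => (m i)^2) := by
      rw [← summable_nat_add_iff k]
      have : (fun i => (m (i + k))^2) = fun i => ((4:ℝ)⁻¹) ^ i := by
        funext i
        show ((2⁻¹:ℝ) ^ ((i + k) - k)) ^ 2 = (4⁻¹:ℝ) ^ i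
        rw [Nat.add_sub_cancel, ← pow_mul, mul_comm, pow_mul]
        norm_num
      rw [this]
      exact summable_geometric_of_lt_one (by norm_num) (by norm_num)
    have hgeo : ∑ i ∈ s, (m i)^2 ≤ (k : ℝ) + 2 := by
      refine (Summable.sum_le_tsum s (fun i _ => by positivity) hmsum).trans ?_
      have hsplit := Summable.sum_add_tsum_nat_add (f := fun i => (m i)^2) k hmsum
      have hfin : ∑ i ∈ Finset.range k, (m i)^2 = (k:ℝ) := by
        have hone : ∀ i ∈ Finset.range k, (m i)^2 = 1 := by
          intro i hi
          have hik : i - k = 0 := by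
            have := Finset.mem_range.mp hi; omega
          simp [hm, hik]
        rw [Finset.sum_congr rfl hone, Finset.sum_const, nsmul_eq_mul, mul_one,
          Finset.card_range]
      have htail : ∑' i, (m (i + k))^2 = 4/3 := by
        have h1 : (fun i => (m (i + k))^2) = fun i => ((4:ℝ)⁻¹) ^ i := by
          funext i
          show ((2⁻¹:ℝ) ^ ((i + k) - k)) ^ 2 = (4⁻¹:ℝ) ^ i
          rw [Nat.add_sub_cancel, ← pow_mul, mul_comm, pow_mul]
          norm_num
        rw [h1, tsum_geometric_of_lt_one (by norm_num) (by norm_num)]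
        norm_num
      rw [← hsplit, hfin, htail]
      norm_num
    have hxsq : 0 ≤ ‖x‖^2 := by positivity
    calc 2 * Ck^2 * (∑ i ∈ s, ‖(x : ℕ → ℂ) i‖^2) + 2 * Ck^2 * (∑ i ∈ s, (m i)^2)
        ≤ 2 * Ck^2 * ‖x‖^2 + 2 * Ck^2 * ((k:ℝ) + 2) := by
          gcongr
        _ ≤ D / (k + 1) := by
          rw [hCk, hD]
          have hk1 : (0:ℝ) < (k:ℝ) + 1 := by positivity
          have heq : 2 * (2*π/((k:ℝ)+1))^2 * ‖x‖^2 + 2 * (2*π/((k:ℝ)+1))^2 * ((k:ℝ)+2)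
              = 8*π^2*(‖x‖^2 + (k:ℝ) + 2) / (((k:ℝ)+1)^2) := by
            field_simp
            ring
          rw [heq, div_le_div_iff₀ (by positivity) hk1]
          nlinarith [hπ, hxsq, Nat.cast_nonneg (α := ℝ) k, sq_nonneg π,
            mul_nonneg (mul_nonneg (sq_nonneg π) (Nat.cast_nonneg (α := ℝ) k)) hxsq,
            mul_nonneg (sq_nonneg π) (Nat.cast_nonneg (α := ℝ) k)]
  -- conclude by squeeze
  have hlim : Filter.Tendsto (fun k : ℕ => Real.sqrt (D / (k + 1))) Filter.atTop (nhds 0) := by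
    have h1 : Filter.Tendsto (fun k : ℕ => D / ((k:ℝ) + 1)) Filter.atTop (nhds 0) := by
      have := tendsto_one_div_add_atTop_nhds_zero_nat.const_mul D
      simpa [div_eq_mul_inv, mul_comm, mul_assoc, one_div] using this
    have := h1.sqrt
    simpa using this
  exact squeeze_zero (fun k => norm_nonneg _) hnorm hlim
end

section
/- Edelstein's map I on ℓ² = lp (fun _ : ℕ => ℂ) 2, defined coordinatewise by (I x)(n) = exp(2πi/(n+1)!)·(x(n) − 1) + 1, has zero drift: ‖I^[n](0)‖/n → 0 as n → ∞, where 0 is the zero sequence. -/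
open Complex Real Filter
open scoped ENNReal

lemma aux_exp_dist (θ : ℝ) : ‖Complex.exp (θ * Complex.I) - 1‖ ≤ |θ| := by
  have h1 : Complex.normSq (Complex.exp (θ * Complex.I) - 1) = 2 - 2 * Real.cos θ := by
    rw [Complex.normSq_apply]
    simp [Complex.exp_ofReal_mul_I_re, Complex.exp_ofReal_mul_I_im]
    nlinarith [Real.sin_sq_add_cos_sq θ]
  have h2 : 2 - 2 * Real.cos θ ≤ θ ^ 2 := by
    nlinarith [Real.one_sub_sq_div_two_le_cos (x := θ)]
  calc ‖Complex.exp (θ * Complex.I) - 1‖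
      = Real.sqrt (Complex.normSq (Complex.exp (θ * Complex.I) - 1)) := by
        rw [Complex.norm_def]
    _ ≤ Real.sqrt (θ ^ 2) := Real.sqrt_le_sqrt (by rw [h1]; exact h2)
    _ = |θ| := Real.sqrt_sq_eq_abs θ

lemma aux_fact (k : ℕ) : 2 ^ k ≤ Nat.factorial (k + 1) := by
  induction k with
  | zero => simp
  | succ k ih =>
      calc 2 ^ (k + 1) = 2 * 2 ^ k := by ring
        _ ≤ 2 * Nat.factorial (k + 1) := by omega
        _ ≤ (k + 2) * Nat.factorial (k + 1) := by
            exact Nat.mul_le_mul_right _ (by omega)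
        _ = Nat.factorial (k + 2) := rfl

/-- **Edelstein's map has zero drift.**
If `Ihat` is Edelstein's isometry of `ℓ²`, given coordinatewise by
`(Ihat x) n = exp(2πi/(n+1)!) * (x n - 1) + 1`, then `‖Ihat^[n] 0‖ / n → 0`. -/
theorem edelstein_zero_drift
    (Ihat : lp (fun _ : ℕ => ℂ) 2 → lp (fun _ : ℕ => ℂ) 2)
    (hI : ∀ (x : lp (fun _ : ℕ => ℂ) 2) (n : ℕ),
      (Ihat x : ℕ → ℂ) n
        = Complex.exp (2 * Real.pi * Complex.I / (Nat.factorial (n + 1) : ℂ))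
            * ((x : ℕ → ℂ) n - 1) + 1) :
    Filter.Tendsto (fun n : ℕ => ‖Ihat^[n] (0 : lp (fun _ : ℕ => ℂ) 2)‖ / n)
      Filter.atTop (nhds 0) := by
  -- coordinate formula
  have hcoord : ∀ n k, ((Ihat^[n] (0 : lp (fun _ : ℕ => ℂ) 2)) : ℕ → ℂ) k
      = 1 - Complex.exp (2 * Real.pi * Complex.I / (Nat.factorial (k + 1) : ℂ)) ^ n := by
    intro n
    induction n with
    | zero => intro k; simp
    | succ n ih =>
        intro k
        rw [Function.iterate_succ_apply', hI, ih k]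
        ring
  -- pointwise norm-squared bound
  have hpt : ∀ n k, ‖((Ihat^[n] (0 : lp (fun _ : ℕ => ℂ) 2)) : ℕ → ℂ) k‖ ^ 2
      ≤ 16 * n * (1 / 2 : ℝ) ^ k := by
    intro n k
    set θ : ℝ := 2 * Real.pi * n / (Nat.factorial (k + 1) : ℝ) with hθ
    have hfac : (0 : ℝ) < (Nat.factorial (k + 1) : ℝ) := by
      exact_mod_cast (Nat.factorial_pos _)
    have hθ0 : 0 ≤ θ := by positivity
    have hθc : ((θ : ℝ) : ℂ) = 2 * Real.pi * n / ((Nat.factorial (k + 1) : ℕ) : ℂ) := by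
      rw [hθ]; push_cast; ring
    have hexp : Complex.exp (2 * Real.pi * Complex.I / (Nat.factorial (k + 1) : ℂ)) ^ n
        = Complex.exp ((θ : ℂ) * Complex.I) := by
      rw [← Complex.exp_nat_mul]
      congr 1
      rw [hθc]
      have hfc : ((Nat.factorial (k + 1) : ℕ) : ℂ) ≠ 0 := by
        exact_mod_cast (Nat.factorial_pos (k+1)).ne'
      field_simp
    have hle1 : ‖((Ihat^[n] (0 : lp (fun _ : ℕ => ℂ) 2)) : ℕ → ℂ) k‖ ≤ 2 := by
      rw [hcoord n k, hexp]
      calc ‖1 - Complex.exp ((θ : ℂ) * Complex.I)‖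
          ≤ ‖(1 : ℂ)‖ + ‖Complex.exp ((θ : ℂ) * Complex.I)‖ := norm_sub_le _ _
        _ = 2 := by
            rw [Complex.norm_exp_ofReal_mul_I]
            norm_num
    have hle2 : ‖((Ihat^[n] (0 : lp (fun _ : ℕ => ℂ) 2)) : ℕ → ℂ) k‖ ≤ θ := by
      rw [hcoord n k, hexp, norm_sub_rev]
      simpa [_root_.abs_of_nonneg hθ0] using aux_exp_dist θ
    have hsq : ‖((Ihat^[n] (0 : lp (fun _ : ℕ => ℂ) 2)) : ℕ → ℂ) k‖ ^ 2 ≤ 2 * θ := by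
      have := mul_le_mul hle1 hle2 (norm_nonneg _) (by norm_num)
      nlinarith [norm_nonneg (((Ihat^[n] (0 : lp (fun _ : ℕ => ℂ) 2)) : ℕ → ℂ) k)]
    refine hsq.trans ?_
    have hfle : (2 : ℝ) ^ k ≤ (Nat.factorial (k + 1) : ℝ) := by
      exact_mod_cast aux_fact k
    have hpow : (0 : ℝ) < 2 ^ k := by positivity
    have hπ : Real.pi ≤ 4 := Real.pi_le_four
    have hn0 : (0:ℝ) ≤ n := Nat.cast_nonneg n
    rw [hθ]
    calc 2 * (2 * Real.pi * ↑n / (Nat.factorial (k + 1) : ℝ))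
        = 4 * Real.pi * n / (Nat.factorial (k + 1) : ℝ) := by ring
      _ ≤ 16 * n / (Nat.factorial (k + 1) : ℝ) := by
          gcongr
          nlinarith [Real.pi_pos]
      _ ≤ 16 * n / (2:ℝ) ^ k := by
          gcongr
      _ = 16 * n * (1 / 2 : ℝ) ^ k := by
          rw [div_pow, one_pow]; ring
  -- norm bound
  have hnorm : ∀ n : ℕ, ‖Ihat^[n] (0 : lp (fun _ : ℕ => ℂ) 2)‖ ≤ Real.sqrt (32 * n) := by
    intro n
    have hp : (0 : ℝ) < (2 : ℝ≥0∞).toReal := by norm_num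
    refine lp.norm_le_of_forall_sum_le hp (Real.sqrt_nonneg _) (fun s => ?_)
    have htoReal : ((2 : ℝ≥0∞).toReal) = (2 : ℝ) := by norm_num
    have hsq32 : Real.sqrt (32 * n) ^ ((2 : ℝ≥0∞).toReal) = 32 * n := by
      rw [htoReal, Real.rpow_two, Real.sq_sqrt (by positivity)]
    rw [hsq32]
    calc ∑ k ∈ s, ‖((Ihat^[n] (0 : lp (fun _ : ℕ => ℂ) 2)) : ℕ → ℂ) k‖ ^ ((2 : ℝ≥0∞).toReal)
        ≤ ∑ k ∈ s, 16 * n * (1 / 2 : ℝ) ^ k := by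
          refine Finset.sum_le_sum (fun k _ => ?_)
          rw [htoReal, Real.rpow_two]
          exact hpt n k
      _ = 16 * n * ∑ k ∈ s, (1 / 2 : ℝ) ^ k := by rw [Finset.mul_sum]
      _ ≤ 16 * n * 2 := by
          have hsum : ∑ k ∈ s, (1 / 2 : ℝ) ^ k ≤ 2 := by
            have h := Summable.sum_le_tsum s (fun k _ => by positivity)
              (summable_geometric_of_lt_one (by norm_num) (by norm_num : (1/2:ℝ) < 1))
            refine h.trans ?_
            rw [tsum_geometric_of_lt_one (by norm_num) (by norm_num)]
            norm_num
          have : (0:ℝ) ≤ 16 * n := by positivity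
          exact mul_le_mul_of_nonneg_left hsum this
      _ = 32 * n := by ring
  -- squeeze
  have hub : ∀ n : ℕ, ‖Ihat^[n] (0 : lp (fun _ : ℕ => ℂ) 2)‖ / n ≤ Real.sqrt (32 / n) := by
    intro n
    rcases Nat.eq_zero_or_pos n with rfl | hn
    · simp [Real.sqrt_nonneg]
    · have hn' : (0:ℝ) < n := by exact_mod_cast hn
      have hnn := norm_nonneg (Ihat^[n] (0 : lp (fun _ : ℕ => ℂ) 2))
      have h2 : ‖Ihat^[n] (0 : lp (fun _ : ℕ => ℂ) 2)‖ ^ 2 ≤ 32 * n := by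
        have := pow_le_pow_left₀ hnn (hnorm n) 2
        rwa [Real.sq_sqrt (by positivity)] at this
      calc ‖Ihat^[n] (0 : lp (fun _ : ℕ => ℂ) 2)‖ / n
          = Real.sqrt ((‖Ihat^[n] (0 : lp (fun _ : ℕ => ℂ) 2)‖ / n) ^ 2) := by
            rw [Real.sqrt_sq (by positivity)]
        _ ≤ Real.sqrt (32 / n) := by
            apply Real.sqrt_le_sqrt
            rw [div_pow, show (32 : ℝ) / n = 32 * n / (n ^ 2) by field_simp]
            gcongr
  have hlim : Filter.Tendsto (fun n : ℕ => Real.sqrt (32 / n)) Filter.atTop (nhds 0) := by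
    have h0 : Filter.Tendsto (fun n : ℕ => (32 : ℝ) / n) Filter.atTop (nhds 0) :=
      tendsto_const_div_atTop_nhds_zero_nat 32
    have := (Real.continuous_sqrt.tendsto' 0 0 (by simp)).comp h0
    exact this
  exact squeeze_zero (fun n => div_nonneg (norm_nonneg _) (Nat.cast_nonneg n)) hub hlim
end

section
/- For every integer m ≥ 1, the m-th iterate of Edelstein's map I on ℓ² = lp (fun _ : ℕ => ℂ) 2, defined coordinatewise by (I x)(n) = exp(2πi/(n+1)!)·(x(n) − 1) + 1, has no fixed point: there is no x ∈ ℓ² with I^[m](x) = x. -/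
/-- **No power of Edelstein's map has a fixed point.**
If `Ihat` is Edelstein's isometry of `ℓ²`, given coordinatewise by
`(Ihat x) n = exp(2πi/(n+1)!) * (x n - 1) + 1`, then for every `m ≥ 1` the iterate
`Ihat^[m]` has no fixed point. -/
theorem edelstein_powers_no_fixed_point
    (Ihat : lp (fun _ : ℕ => ℂ) 2 → lp (fun _ : ℕ => ℂ) 2)
    (hI : ∀ (x : lp (fun _ : ℕ => ℂ) 2) (n : ℕ),
      (Ihat x : ℕ → ℂ) n
        = Complex.exp (2 * Real.pi * Complex.I / (Nat.factorial (n + 1) : ℂ))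
            * ((x : ℕ → ℂ) n - 1) + 1) :
    ∀ m : ℕ, 1 ≤ m → ¬ ∃ x : lp (fun _ : ℕ => ℂ) 2, Ihat^[m] x = x := by
  rintro m hm ⟨x, hx⟩
  -- iteration formula
  have key : ∀ (k : ℕ) (y : lp (fun _ : ℕ => ℂ) 2) (n : ℕ),
      (Ihat^[k] y : ℕ → ℂ) n
        = (Complex.exp (2 * Real.pi * Complex.I / (Nat.factorial (n + 1) : ℂ)))^k
            * ((y : ℕ → ℂ) n - 1) + 1 := by
    intro k
    induction k with
    | zero => intro y n; simp
    | succ k ih =>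
      intro y n
      rw [Function.iterate_succ_apply', hI, ih]
      ring
  -- coordinates are eventually 1
  have hcoord : ∀ n : ℕ, m ≤ n → (x : ℕ → ℂ) n = 1 := by
    intro n hn
    have h1 : (Ihat^[m] x : ℕ → ℂ) n = (x : ℕ → ℂ) n := by rw [hx]
    rw [key] at h1
    have h2 : ((Complex.exp (2 * Real.pi * Complex.I / (Nat.factorial (n + 1) : ℂ)))^m - 1)
        * ((x : ℕ → ℂ) n - 1) = 0 := by linear_combination h1
    have hne : (Complex.exp (2 * Real.pi * Complex.I / (Nat.factorial (n + 1) : ℂ)))^m ≠ 1 := by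
      intro hone
      rw [← Complex.exp_nat_mul] at hone
      obtain ⟨k, hk⟩ := Complex.exp_eq_one_iff.mp hone
      have hfne : ((Nat.factorial (n + 1) : ℂ)) ≠ 0 := by
        exact_mod_cast (Nat.factorial_pos (n + 1)).ne'
      have h2pi : (2 * (Real.pi : ℂ) * Complex.I) ≠ 0 := by
        simp [Real.pi_ne_zero, Complex.I_ne_zero, Complex.ofReal_ne_zero]
      field_simp at hk
      have hcc : (m : ℂ) * (2 * (Real.pi : ℂ) * Complex.I)
          = ((k : ℂ) * (Nat.factorial (n + 1) : ℂ)) * (2 * (Real.pi : ℂ) * Complex.I) := by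
        linear_combination (2 * (Real.pi : ℂ) * Complex.I) * hk
      have hmc : (m : ℂ) = (k : ℂ) * (Nat.factorial (n + 1) : ℂ) :=
        mul_right_cancel₀ h2pi hcc
      have hz : (m : ℤ) = k * (Nat.factorial (n + 1) : ℤ) := by exact_mod_cast hmc
      have hflt : (m : ℤ) < (Nat.factorial (n + 1) : ℤ) := by
        have : m < Nat.factorial (n + 1) :=
          lt_of_le_of_lt hn
            (lt_of_lt_of_le (Nat.lt_succ_self n) (Nat.self_le_factorial (n + 1)))
        exact_mod_cast this
      have hm1 : (1 : ℤ) ≤ (m : ℤ) := by exact_mod_cast hm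
      have hf1 : (1 : ℤ) ≤ (Nat.factorial (n + 1) : ℤ) := by
        exact_mod_cast Nat.one_le_iff_ne_zero.mpr (Nat.factorial_pos (n + 1)).ne'
      rcases le_or_gt k 0 with hk0 | hk0
      · nlinarith
      · have : (1 : ℤ) ≤ k := hk0
        nlinarith
    rcases mul_eq_zero.mp h2 with h | h
    · exact absurd (sub_eq_zero.mp h) hne
    · linear_combination h
  -- contradiction with square-summability
  have hmem : Memℓp (x : ℕ → ℂ) 2 := lp.memℓp x
  have hsum : Summable fun n => ‖(x : ℕ → ℂ) n‖ ^ (2 : ENNReal).toReal :=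
    hmem.summable (by norm_num)
  have h0 := hsum.tendsto_atTop_zero
  have h1 : (fun n => ‖(x : ℕ → ℂ) n‖ ^ (2 : ENNReal).toReal)
      =ᶠ[Filter.atTop] fun _ => (1 : ℝ) := by
    filter_upwards [Filter.eventually_ge_atTop m] with n hn
    rw [hcoord n hn]; simp
  have := tendsto_nhds_unique (h0.congr' h1) tendsto_const_nhds
  norm_num at this
end

section
/- Let J : (ℕ → ℝ) → (ℕ → ℝ) be the map defined by (J x)(0) = 1 and (J x)(n+1) = x(n). Then J maps ℓ¹ = lp (fun _ : ℕ => ℝ) 1 into itself, it preserves distances (‖J x − J y‖₁ = ‖x − y‖₁ for all x, y ∈ ℓ¹), the drift of J equals 1 (i.e., ‖J^[n](0)‖₁/n → 1), yet the sequence n ↦ (1/n) • J^[n](0) has no limit in ℓ¹. -/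
open Filter

private lemma l1_summable' (f : lp (fun _ : ℕ => ℝ) 1) :
    Summable fun i => ‖(f : ℕ → ℝ) i‖ := by
  have := (lp.memℓp f).summable (p := 1) (by simp)
  simpa using this

private lemma l1_norm_eq' (f : lp (fun _ : ℕ => ℝ) 1) :
    ‖f‖ = ∑' i, ‖(f : ℕ → ℝ) i‖ := by
  have h : (0:ℝ) < (1 : ENNReal).toReal := by simp
  rw [lp.norm_eq_tsum_rpow h f]
  simp



/-- **A shift-like isometric map of `ℓ¹` with drift 1 but no asymptotic translation vector.**
The map `J` with `(J x) 0 = 1` and `(J x) (n+1) = x n` maps `ℓ¹` into itself, preserves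
distances, has drift `1`, yet `(1/n) • J^[n] 0` has no limit in `ℓ¹`. -/
theorem shift_isometry_l1_drift_one_no_limit
    (J : (ℕ → ℝ) → (ℕ → ℝ))
    (hJ0 : ∀ x : ℕ → ℝ, J x 0 = 1)
    (hJS : ∀ (x : ℕ → ℝ) (n : ℕ), J x (n + 1) = x n) :
    (∀ x : lp (fun _ : ℕ => ℝ) 1, Memℓp (J (x : ℕ → ℝ)) 1) ∧
    ∃ Jhat : lp (fun _ : ℕ => ℝ) 1 → lp (fun _ : ℕ => ℝ) 1,
      (∀ x : lp (fun _ : ℕ => ℝ) 1, (Jhat x : ℕ → ℝ) = J (x : ℕ → ℝ)) ∧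
      (∀ x y : lp (fun _ : ℕ => ℝ) 1, ‖Jhat x - Jhat y‖ = ‖x - y‖) ∧
      Filter.Tendsto (fun n : ℕ => ‖Jhat^[n] (0 : lp (fun _ : ℕ => ℝ) 1)‖ / n)
        Filter.atTop (nhds 1) ∧
      ¬ ∃ L : lp (fun _ : ℕ => ℝ) 1,
        Filter.Tendsto (fun n : ℕ => (n : ℝ)⁻¹ • Jhat^[n] (0 : lp (fun _ : ℕ => ℝ) 1))
          Filter.atTop (nhds L) := by
  have hmem : ∀ x : lp (fun _ : ℕ => ℝ) 1, Memℓp (J (x : ℕ → ℝ)) 1 := by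
    intro x
    apply memℓp_gen
    have hsum : Summable fun n => ‖J (x : ℕ → ℝ) (n + 1)‖ := by
      simpa [hJS] using l1_summable' x
    have : Summable fun n => ‖J (x : ℕ → ℝ) n‖ :=
      (summable_nat_add_iff 1).mp hsum
    simpa using this
  refine ⟨hmem, ?_⟩
  set E := lp (fun _ : ℕ => ℝ) 1 with hE
  let Jhat : E → E := fun x => ⟨J (x : ℕ → ℝ), hmem x⟩
  have hcoe : ∀ x : E, (Jhat x : ℕ → ℝ) = J (x : ℕ → ℝ) := fun x => rfl
  -- isometry
  have hiso : ∀ x y : E, ‖Jhat x - Jhat y‖ = ‖x - y‖ := by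
    intro x y
    rw [l1_norm_eq' (Jhat x - Jhat y), l1_norm_eq' (x - y)]
    rw [Summable.tsum_eq_zero_add (l1_summable' (Jhat x - Jhat y))]
    have h0 : ‖((Jhat x - Jhat y : E) : ℕ → ℝ) 0‖ = 0 := by
      simp [lp.coeFn_sub, hcoe, hJ0]
      exact sub_eq_zero.mpr ((hJ0 _).trans (hJ0 _).symm)
    rw [h0, zero_add]
    congr 1
    funext n
    simp [lp.coeFn_sub, hcoe, hJS]
    change |J _ (n + 1) - J _ (n + 1)| = _
    rw [hJS, hJS]
  -- coordinates of the iterates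
  have hiter : ∀ n k : ℕ, ((Jhat^[n] (0 : E) : E) : ℕ → ℝ) k = if k < n then 1 else 0 := by
    intro n
    induction n with
    | zero => intro k; simp
    | succ n ih =>
      intro k
      rw [Function.iterate_succ_apply']
      cases k with
      | zero => simp [hcoe, hJ0]
      | succ j =>
        rw [hcoe, hJS, ih j]
        simp [Nat.succ_lt_succ_iff]
  -- norm of the iterates
  have hnorm : ∀ n : ℕ, ‖Jhat^[n] (0 : E)‖ = n := by
    intro n
    rw [l1_norm_eq']
    have : ∀ k ∉ Finset.range n, ‖((Jhat^[n] (0:E) : E) : ℕ → ℝ) k‖ = 0 := by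
      intro k hk
      simp only [Finset.mem_range, not_lt] at hk
      rw [hiter]
      simp [Nat.not_lt.mpr hk]
    rw [tsum_eq_sum this]
    have : ∀ k ∈ Finset.range n, ‖((Jhat^[n] (0:E) : E) : ℕ → ℝ) k‖ = 1 := by
      intro k hk
      simp only [Finset.mem_range] at hk
      rw [hiter]; simp [hk]
    rw [Finset.sum_congr rfl this]
    simp
  refine ⟨Jhat, hcoe, hiso, ?_, ?_⟩
  · -- drift 1
    apply Tendsto.congr' _ tendsto_const_nhds
    filter_upwards [eventually_ge_atTop 1] with n hn
    rw [hnorm n]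
    field_simp
  · -- no limit
    rintro ⟨L, hL⟩
    set v : ℕ → E := fun n => (n : ℝ)⁻¹ • Jhat^[n] (0 : E) with hv
    -- ‖v n‖ = 1 eventually
    have hvnorm : ∀ n : ℕ, 1 ≤ n → ‖v n‖ = 1 := by
      intro n hn
      rw [hv]
      simp only [norm_smul, hnorm n, norm_inv, Real.norm_natCast]
      field_simp
    have hnL : ‖L‖ = 1 := by
      have h1 : Tendsto (fun n : ℕ => ‖v n‖) atTop (nhds ‖L‖) := hL.norm
      have h2 : Tendsto (fun n : ℕ => ‖v n‖) atTop (nhds 1) := by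
        apply Tendsto.congr' _ tendsto_const_nhds
        filter_upwards [eventually_ge_atTop 1] with n hn
        exact (hvnorm n hn).symm
      exact tendsto_nhds_unique h1 h2
    -- each coordinate of L is 0
    have hLk : ∀ k : ℕ, (L : ℕ → ℝ) k = 0 := by
      intro k
      have hcoord : Tendsto (fun n : ℕ => ((v n : E) : ℕ → ℝ) k) atTop (nhds ((L : ℕ → ℝ) k)) := by
        rw [tendsto_iff_norm_sub_tendsto_zero]
        have hle : ∀ n : ℕ, ‖((v n : E) : ℕ → ℝ) k - (L : ℕ → ℝ) k‖ ≤ ‖v n - L‖ := by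
          intro n
          have := lp.norm_apply_le_norm (p := 1) one_ne_zero (v n - L) k
          simpa [lp.coeFn_sub] using this
        have h0 : Tendsto (fun n : ℕ => ‖v n - L‖) atTop (nhds 0) :=
          tendsto_iff_norm_sub_tendsto_zero.mp hL
        exact squeeze_zero (fun n => norm_nonneg _) hle h0
      have hcoord0 : Tendsto (fun n : ℕ => ((v n : E) : ℕ → ℝ) k) atTop (nhds 0) := by
        have heq : ∀ᶠ n : ℕ in atTop, (n : ℝ)⁻¹ = ((v n : E) : ℕ → ℝ) k := by
          filter_upwards [eventually_gt_atTop k] with n hn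
          have : ((((n:ℝ)⁻¹ • Jhat^[n] (0:E) : E)) : ℕ → ℝ) k = (n:ℝ)⁻¹ * (((Jhat^[n] (0:E) : E) : ℕ → ℝ) k) := by
            rw [lp.coeFn_smul]; simp
          rw [hv, this, hiter]
          simp [hn]
        exact Tendsto.congr' heq tendsto_inv_atTop_nhds_zero_nat
      exact tendsto_nhds_unique hcoord hcoord0
    have : L = 0 := by
      ext k
      simpa using hLk k
    rw [this] at hnL
    simp at hnL
end

section
/- Let F : ℝ → ℝ be a C¹ function with F(x+1) = F(x) + 1 and deriv F(x) > 0 for all x (a lift of a C¹ circle diffeomorphism), and let φ : ℝ → ℝ be a continuous 1-periodic function satisfying the cohomological equation φ(F(x)) = φ(x) + log(deriv F(x)) for all x ∈ ℝ. Define h : ℝ → ℝ by h(x) = (∫₀ˣ e^{−φ(s)} ds) / (∫₀¹ e^{−φ(s)} ds). Then h is a C¹ function with h(x+1) = h(x) + 1 and deriv h(x) > 0 for all x, and there exists ρ ∈ ℝ such that h(F(x)) = h(x) + ρ for all x ∈ ℝ; that is, h conjugates F to the translation x ↦ x + ρ. -/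
/-- **A continuous solution of the logarithmic cohomological equation yields a `C¹`
conjugacy to a translation.**
If `F` is a lift of a `C¹` circle diffeomorphism, `φ` is continuous, `1`-periodic and
satisfies `φ ∘ F = φ + log (deriv F)`, then `h x = (∫₀ˣ e^{-φ}) / (∫₀¹ e^{-φ})` is a `C¹`
lift of a circle diffeomorphism conjugating `F` to a translation. -/
theorem fixed_point_log_cocycle_gives_C1_conjugacy
    (F : ℝ → ℝ) (hF : ContDiff ℝ 1 F)
    (hFlift : ∀ x : ℝ, F (x + 1) = F x + 1)
    (hF' : ∀ x : ℝ, 0 < deriv F x)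
    (φ : ℝ → ℝ) (hφcont : Continuous φ)
    (hφper : ∀ x : ℝ, φ (x + 1) = φ x)
    (hcohom : ∀ x : ℝ, φ (F x) = φ x + Real.log (deriv F x))
    (h : ℝ → ℝ)
    (hh : ∀ x : ℝ, h x
      = (∫ s in (0:ℝ)..x, Real.exp (-φ s)) / ∫ s in (0:ℝ)..1, Real.exp (-φ s)) :
    ContDiff ℝ 1 h ∧ (∀ x : ℝ, h (x + 1) = h x + 1) ∧ (∀ x : ℝ, 0 < deriv h x) ∧
      ∃ ρ : ℝ, ∀ x : ℝ, h (F x) = h x + ρ := by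
  set ψ : ℝ → ℝ := fun s => Real.exp (-φ s) with hψ
  have hψcont : Continuous ψ := (hφcont.neg).rexp
  have hψpos : ∀ s, 0 < ψ s := fun s => Real.exp_pos _
  have hψint : ∀ a b : ℝ, IntervalIntegrable ψ MeasureTheory.volume a b :=
    fun a b => hψcont.intervalIntegrable a b
  set c : ℝ := ∫ s in (0:ℝ)..1, ψ s with hc
  have hcpos : 0 < c :=
    intervalIntegral.intervalIntegral_pos_of_pos (hψint 0 1) hψpos one_pos
  -- derivative of h
  have hhd : ∀ x : ℝ, HasDerivAt h (ψ x / c) x := by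
    intro x
    have h1 : HasDerivAt (fun u => ∫ s in (0:ℝ)..u, ψ s) (ψ x) x :=
      (hψcont.integral_hasStrictDerivAt 0 x).hasDerivAt
    have := h1.div_const c
    refine this.congr_of_eventuallyEq ?_
    filter_upwards with y
    rw [hh y]
  have hderiv : deriv h = fun x => ψ x / c := funext fun x => (hhd x).deriv
  have hdiff : Differentiable ℝ h := fun x => (hhd x).differentiableAt
  constructor
  · rw [contDiff_one_iff_deriv]
    exact ⟨hdiff, by rw [hderiv]; exact hψcont.div_const c⟩
  refine ⟨?_, ?_, ?_⟩
  · -- periodicity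
    intro x
    have hper : Function.Periodic ψ 1 := fun s => by simp [hψ, hφper s]
    have : (∫ s in (0:ℝ)..(x+1), ψ s) = (∫ s in (0:ℝ)..x, ψ s) + c := by
      rw [← intervalIntegral.integral_add_adjacent_intervals (hψint 0 x) (hψint x (x+1))]
      congr 1
      simpa using hper.intervalIntegral_add_eq x 0
    rw [hh (x+1), hh x, this, add_div, div_self hcpos.ne']
  · intro x
    rw [hderiv]
    exact div_pos (hψpos x) hcpos
  · -- conjugacy
    have hFd : ∀ x : ℝ, HasDerivAt F (deriv F x) x :=
      fun x => (hF.differentiable one_ne_zero x).hasDerivAt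
    have hkey : ∀ x : ℝ, ψ (F x) = ψ x / deriv F x := by
      intro x
      rw [hψ]
      simp only [hcohom x, neg_add, Real.exp_add, Real.exp_neg (Real.log (deriv F x)),
        Real.exp_log (hF' x)]
      rw [div_eq_mul_inv]
    have hgd : ∀ x : ℝ, HasDerivAt (fun y => h (F y) - h y) 0 x := by
      intro x
      have h1 : HasDerivAt (fun y => h (F y)) (ψ (F x) / c * deriv F x) x :=
        (hhd (F x)).comp x (hFd x)
      have h2 : HasDerivAt (fun y => h (F y) - h y) (ψ (F x) / c * deriv F x - ψ x / c) x :=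
        h1.sub (hhd x)
      convert h2 using 1
      have hne : deriv F x ≠ 0 := (hF' x).ne'
      have hcne : c ≠ 0 := hcpos.ne'
      rw [hkey x]
      field_simp
      ring
    have hconst : ∀ x : ℝ, h (F x) - h x = h (F 0) - h 0 := by
      intro x
      exact is_const_of_deriv_eq_zero (fun y => ((hgd y).differentiableAt : _))
        (fun y => (hgd y).deriv) x 0
    exact ⟨h (F 0) - h 0, fun x => by have := hconst x; linarith⟩
end

section
/- Let F : ℝ → ℝ be a C² function with F(x+1) = F(x) + 1 and deriv F(x) > 0 for all x, and let ψ : ℝ → ℝ be a 1-periodic locally integrable function with ∫₀¹ ψ(t) dt = 0 satisfying ψ(F(x)) · deriv F(x) = ψ(x) + (deriv (deriv F))(x) / deriv F(x) for almost every x ∈ ℝ. Define h : ℝ → ℝ by h(x) = (∫₀ˣ e^{−∫₀ˢ ψ(t) dt} ds) / (∫₀¹ e^{−∫₀ˢ ψ(t) dt} ds). Then h is strictly increasing with h(x+1) = h(x) + 1, and there exists ρ ∈ ℝ such that h(F(x)) = h(x) + ρ for all x ∈ ℝ. -/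
open MeasureTheory

namespace AffineCocycleAux

noncomputable def Psi (ψ : ℝ → ℝ) : ℝ → ℝ := fun s => ∫ t in (0:ℝ)..s, ψ t

noncomputable def gg (ψ : ℝ → ℝ) : ℝ → ℝ := fun s => Real.exp (-(Psi ψ s))

noncomputable def HH (ψ : ℝ → ℝ) : ℝ → ℝ := fun x => ∫ s in (0:ℝ)..x, gg ψ s

variable {ψ : ℝ → ℝ}

lemma psi_int (hψloc : LocallyIntegrable ψ volume) (a b : ℝ) :
    IntervalIntegrable ψ volume a b :=
  intervalIntegrable_iff.2
    ((hψloc.integrableOn_isCompact isCompact_uIcc).mono_set Set.Ioc_subset_Icc_self)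

lemma Psi_cont (hψloc : LocallyIntegrable ψ volume) : Continuous (Psi ψ) :=
  intervalIntegral.continuous_primitive (psi_int hψloc) 0

lemma gg_cont (hψloc : LocallyIntegrable ψ volume) : Continuous (gg ψ) :=
  Real.continuous_exp.comp (Psi_cont hψloc).neg

lemma gg_pos (s : ℝ) : 0 < gg ψ s := Real.exp_pos _

lemma HH_hasDerivAt (hψloc : LocallyIntegrable ψ volume) (x : ℝ) :
    HasDerivAt (HH ψ) (gg ψ x) x :=
  ((gg_cont hψloc).integral_hasStrictDerivAt 0 x).hasDerivAt

lemma HH_sub (hψloc : LocallyIntegrable ψ volume) (a b : ℝ) :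
    HH ψ b - HH ψ a = ∫ s in a..b, gg ψ s := by
  have := intervalIntegral.integral_add_adjacent_intervals
    ((gg_cont hψloc).intervalIntegrable (μ := volume) 0 a) ((gg_cont hψloc).intervalIntegrable (μ := volume) a b)
  simp only [HH]
  linarith

lemma HH_strictMono (hψloc : LocallyIntegrable ψ volume) : StrictMono (HH ψ) := by
  intro a b hab
  have h1 : 0 < ∫ s in a..b, gg ψ s :=
    intervalIntegral.intervalIntegral_pos_of_pos
      ((gg_cont hψloc).intervalIntegrable a b) (fun s => gg_pos s) hab
  have := HH_sub hψloc a b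
  linarith

lemma Psi_per (hψloc : LocallyIntegrable ψ volume) (hψper : ∀ x : ℝ, ψ (x + 1) = ψ x)
    (hψmean : (∫ t in (0:ℝ)..1, ψ t) = 0) (s : ℝ) : Psi ψ (s + 1) = Psi ψ s := by
  have hper : Function.Periodic ψ 1 := hψper
  have h1 : (∫ t in s..(s+1), ψ t) = ∫ t in (0:ℝ)..(0+1), ψ t :=
    hper.intervalIntegral_add_eq s 0
  rw [zero_add] at h1
  have h2 := intervalIntegral.integral_add_adjacent_intervals
    (psi_int hψloc 0 s) (psi_int hψloc s (s+1))
  simp only [Psi]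
  rw [← h2, h1, hψmean, add_zero]

lemma HH_lift (hψloc : LocallyIntegrable ψ volume) (hψper : ∀ x : ℝ, ψ (x + 1) = ψ x)
    (hψmean : (∫ t in (0:ℝ)..1, ψ t) = 0) (x : ℝ) :
    HH ψ (x + 1) = HH ψ x + HH ψ 1 := by
  have hgper : Function.Periodic (gg ψ) 1 := fun s => by
    simp only [gg, Psi_per hψloc hψper hψmean]
  have h1 : (∫ s in x..(x+1), gg ψ s) = ∫ s in (0:ℝ)..(0+1), gg ψ s :=
    hgper.intervalIntegral_add_eq x 0
  rw [zero_add] at h1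
  have h2 := HH_sub hψloc x (x+1)
  have h3 : HH ψ 1 - HH ψ 0 = ∫ s in (0:ℝ)..1, gg ψ s := HH_sub hψloc 0 1
  have h0 : HH ψ 0 = 0 := intervalIntegral.integral_same
  rw [h1] at h2
  linarith

end AffineCocycleAux

open AffineCocycleAux

/-- **An `L¹` solution of the affine-derivative cohomological equation yields a conjugacy
to a translation.**
If `F` is a lift of a `C²` circle diffeomorphism and `ψ` is `1`-periodic, locally integrable,
has zero mean, and satisfies `ψ∘F · F' = ψ + F''/F'` almost everywhere, then
`h x = (∫₀ˣ e^{-∫₀ˢ ψ}) / (∫₀¹ e^{-∫₀ˢ ψ})` is a strictly increasing lift of a circle map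
conjugating `F` to a translation. -/
theorem fixed_point_affine_cocycle_gives_conjugacy
    (F : ℝ → ℝ) (hF : ContDiff ℝ 2 F)
    (hFlift : ∀ x : ℝ, F (x + 1) = F x + 1)
    (hF' : ∀ x : ℝ, 0 < deriv F x)
    (ψ : ℝ → ℝ) (hψper : ∀ x : ℝ, ψ (x + 1) = ψ x)
    (hψloc : LocallyIntegrable ψ volume)
    (hψmean : (∫ t in (0:ℝ)..1, ψ t) = 0)
    (hcohom : ∀ᵐ x ∂(volume : Measure ℝ),
      ψ (F x) * deriv F x = ψ x + deriv (deriv F) x / deriv F x)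
    (h : ℝ → ℝ)
    (hh : ∀ x : ℝ, h x
      = (∫ s in (0:ℝ)..x, Real.exp (-(∫ t in (0:ℝ)..s, ψ t)))
          / ∫ s in (0:ℝ)..1, Real.exp (-(∫ t in (0:ℝ)..s, ψ t))) :
    StrictMono h ∧ (∀ x : ℝ, h (x + 1) = h x + 1) ∧
      ∃ ρ : ℝ, ∀ x : ℝ, h (F x) = h x + ρ := by
  have hhH : ∀ x : ℝ, h x = HH ψ x / HH ψ 1 := fun x => hh x
  have hC : 0 < HH ψ 1 := by
    have := HH_strictMono hψloc (show (0:ℝ) < 1 by norm_num)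
    have h0 : HH ψ 0 = 0 := intervalIntegral.integral_same
    linarith
  -- regularity of F
  have hF2 : ContDiff ℝ (1 + 1) F := by norm_num; exact hF
  have hFd : Differentiable ℝ F := hF.differentiable (by norm_num)
  have hF'cd : ContDiff ℝ 1 (deriv F) := (contDiff_succ_iff_deriv.mp hF2).2.2
  have hF'd : Differentiable ℝ (deriv F) := hF'cd.differentiable one_ne_zero
  have hF'cont : Continuous (deriv F) := hF'd.continuous
  have hF''cont : Continuous (deriv (deriv F)) := (contDiff_one_iff_deriv.mp hF'cd).2
  have hFmono : StrictMono F := strictMono_of_deriv_pos hF'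
  -- change of variables
  have hsub : ∀ a b : ℝ, a ≤ b →
      (∫ s in (F a)..(F b), ψ s) = ∫ t in a..b, ψ (F t) * deriv F t := by
    intro a b hab
    have himg : F '' Set.Ioc a b = Set.Ioc (F a) (F b) := by
      apply Set.Subset.antisymm
      · rintro _ ⟨t, ht, rfl⟩
        exact ⟨hFmono ht.1, hFmono.le_iff_le.2 ht.2⟩
      · exact intermediate_value_Ioc hab hF.continuous.continuousOn
    have cov := MeasureTheory.integral_image_eq_integral_abs_deriv_smul
      (measurableSet_Ioc : MeasurableSet (Set.Ioc a b))
      (fun t _ => (hFd t).hasDerivAt.hasDerivWithinAt)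
      (hFmono.injective.injOn) ψ
    rw [intervalIntegral.integral_of_le (hFmono.le_iff_le.2 hab), ← himg, cov,
      intervalIntegral.integral_of_le hab]
    apply MeasureTheory.setIntegral_congr_fun measurableSet_Ioc
    intro t _
    dsimp only
    rw [abs_of_pos (hF' t), smul_eq_mul, mul_comm]
  have hkey : ∀ x : ℝ, Psi ψ (F x) - Psi ψ (F 0) = ∫ t in (0:ℝ)..x, ψ (F t) * deriv F t := by
    intro x
    have h2 := intervalIntegral.integral_add_adjacent_intervals
      (psi_int hψloc 0 (F 0)) (psi_int hψloc (F 0) (F x))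
    have h3 : Psi ψ (F x) - Psi ψ (F 0) = ∫ s in (F 0)..(F x), ψ s := by
      simp only [Psi]; linarith
    rcases le_total 0 x with hx | hx
    · rw [h3, hsub 0 x hx]
    · rw [h3, intervalIntegral.integral_symm, hsub x 0 hx, ← intervalIntegral.integral_symm]
  -- the right-hand side
  have hlog : ∀ x : ℝ, HasDerivAt (fun y => Real.log (deriv F y))
      (deriv (deriv F) x / deriv F x) x := by
    intro x
    exact ((hF'd x).hasDerivAt).log (ne_of_gt (hF' x))
  have hqcont : Continuous (fun t => deriv (deriv F) t / deriv F t) :=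
    hF''cont.div hF'cont (fun t => ne_of_gt (hF' t))
  have hrhs : ∀ x : ℝ, (∫ t in (0:ℝ)..x, (ψ t + deriv (deriv F) t / deriv F t))
      = Psi ψ x + (Real.log (deriv F x) - Real.log (deriv F 0)) := by
    intro x
    rw [intervalIntegral.integral_add (psi_int hψloc 0 x) (hqcont.intervalIntegrable 0 x),
      intervalIntegral.integral_eq_sub_of_hasDerivAt (fun t _ => hlog t)
        (hqcont.intervalIntegrable 0 x)]
    rfl
  have hae : ∀ x : ℝ, (∫ t in (0:ℝ)..x, ψ (F t) * deriv F t)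
      = ∫ t in (0:ℝ)..x, (ψ t + deriv (deriv F) t / deriv F t) := fun x =>
    intervalIntegral.integral_congr_ae (hcohom.mono fun t ht _ => ht)
  have hmain : ∀ x : ℝ, Psi ψ (F x)
      = Psi ψ (F 0) + Psi ψ x + Real.log (deriv F x) - Real.log (deriv F 0) := by
    intro x
    have h1 := hkey x
    rw [hae x, hrhs x] at h1
    linarith
  -- the multiplier
  set lam : ℝ := Real.exp (Real.log (deriv F 0) - Psi ψ (F 0)) with hlamdef
  have hglam : ∀ x : ℝ, gg ψ (F x) * deriv F x = lam * gg ψ x := by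
    intro x
    simp only [gg, hlamdef]
    rw [hmain x, show -(Psi ψ (F 0) + Psi ψ x + Real.log (deriv F x) - Real.log (deriv F 0))
      = (Real.log (deriv F 0) - Psi ψ (F 0)) + (-(Psi ψ x)) + (-(Real.log (deriv F x)))
      by ring, Real.exp_add, Real.exp_add, Real.exp_neg (Real.log (deriv F x)),
      Real.exp_log (hF' x)]
    field_simp [ne_of_gt (hF' x)]
  -- H ∘ F = H (F 0) + lam • H
  have hHF : ∀ x : ℝ, HH ψ (F x) = HH ψ (F 0) + lam * HH ψ x := by
    have hD : ∀ x : ℝ, HasDerivAt (fun y => HH ψ (F y) - lam * HH ψ y) 0 x := by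
      intro x
      have h1 : HasDerivAt (fun y => HH ψ (F y)) (gg ψ (F x) * deriv F x) x :=
        (HH_hasDerivAt hψloc (F x)).comp x ((hFd x).hasDerivAt)
      have h2 : HasDerivAt (fun y => lam * HH ψ y) (lam * gg ψ x) x :=
        (HH_hasDerivAt hψloc x).const_mul lam
      have h3 := h1.sub h2
      rwa [hglam x, sub_self] at h3
    intro x
    have hc := is_const_of_deriv_eq_zero (f := fun y => HH ψ (F y) - lam * HH ψ y)
      (fun y => (hD y).differentiableAt) (fun y => (hD y).deriv) x 0
    have h0 : HH ψ 0 = 0 := intervalIntegral.integral_same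
    simp only [h0, mul_zero, sub_zero] at hc
    linarith
  -- lam = 1
  have hlam1 : lam = 1 := by
    have h1 := hHF 1
    have h2 : F 1 = F 0 + 1 := by have := hFlift 0; rwa [zero_add] at this
    rw [h2, HH_lift hψloc hψper hψmean (F 0)] at h1
    have : lam * HH ψ 1 = 1 * HH ψ 1 := by linarith
    exact mul_right_cancel₀ (ne_of_gt hC) this
  refine ⟨?_, ?_, ⟨HH ψ (F 0) / HH ψ 1, ?_⟩⟩
  · intro a b hab
    rw [hhH a, hhH b]
    exact (div_lt_div_iff_of_pos_right hC).mpr (HH_strictMono hψloc hab)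
  · intro x
    rw [hhH (x + 1), hhH x, HH_lift hψloc hψper hψmean x, add_div,
      div_self (ne_of_gt hC)]
  · intro x
    rw [hhH (F x), hhH x, hHF x, hlam1, one_mul, add_comm (HH ψ (F 0)), add_div]
end

section
/- Let a < b < c < d be real numbers with cross-ratio [a,b,c,d] = ((c−a)(d−b))/((d−a)(c−b)) equal to 2. Let g : ℝ → ℝ be a C¹ function with deriv g(x) > 0 for all x ∈ [a,d] (so g is strictly increasing there), and let χ : ℝ × ℝ → ℝ be a measurable function with ∫_{ℝ×ℝ} χ² ≤ K² for some K ≥ 0, such that for almost every (x,y) ∈ [a,b] × [c,d] one has ( 1/(g(y) − g(x)) − χ(g(x), g(y)) )² · deriv g(x) · deriv g(y) = ( 1/(y − x) − χ(x,y) )². Then the cross-ratio of the images satisfies [g(a), g(b), g(c), g(d)] ≤ exp( ( √(log 2) + 2K )² ). -/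
open MeasureTheory

open Set
open scoped ENNReal NNReal

set_option maxHeartbeats 1000000


lemma aux_cauchy {α : Type*} [MeasurableSpace α] {μ : Measure α} {f h : α → ℝ}
    (hf : MemLp f 2 μ) (hh : MemLp h 2 μ) :
    ∫ x, f x * h x ∂μ ≤ Real.sqrt (∫ x, f x ^ 2 ∂μ) * Real.sqrt (∫ x, h x ^ 2 ∂μ) := by
  have h2 : Real.HolderConjugate 2 2 := Real.HolderConjugate.two_two
  have hfa : MemLp (fun x => |f x|) 2 μ := hf.abs
  have hha : MemLp (fun x => |h x|) 2 μ := hh.abs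
  have key := integral_mul_le_Lp_mul_Lq_of_nonneg h2
    (Filter.Eventually.of_forall fun x => abs_nonneg (f x))
    (Filter.Eventually.of_forall fun x => abs_nonneg (h x))
    (by simpa using hfa) (by simpa using hha)
  rw [show ((2:ℝ)) = ((2:ℕ):ℝ) from by norm_num] at key
  simp only [Real.rpow_natCast, sq_abs] at key
  have habs : ∫ x, f x * h x ∂μ ≤ ∫ x, |f x| * |h x| ∂μ := by
    calc ∫ x, f x * h x ∂μ ≤ |∫ x, f x * h x ∂μ| := le_abs_self _
    _ ≤ ∫ x, |f x| * |h x| ∂μ := by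
        simpa [Real.norm_eq_abs, abs_mul] using
          norm_integral_le_integral_norm (μ := μ) (f := fun x => f x * h x)
  refine habs.trans (key.trans_eq ?_)
  norm_num [Real.sqrt_eq_rpow]

lemma aux_minkowski {α : Type*} [MeasurableSpace α] {μ : Measure α} {f h : α → ℝ}
    (hf : MemLp f 2 μ) (hh : MemLp h 2 μ) :
    Real.sqrt (∫ x, (f x + h x) ^ 2 ∂μ)
      ≤ Real.sqrt (∫ x, f x ^ 2 ∂μ) + Real.sqrt (∫ x, h x ^ 2 ∂μ) := by
  have hf2 := hf.integrable_sq
  have hh2 := hh.integrable_sq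
  have hb : Integrable (fun x => (f x ^ 2 + h x ^ 2) / 2) μ := by
    simpa using (hf2.add hh2).div_const 2
  have hfh : Integrable (fun x => f x * h x) μ := by
    refine Integrable.mono' hb (hf.1.mul hh.1)
      (Filter.Eventually.of_forall fun x => ?_)
    rw [Real.norm_eq_abs, abs_mul]
    nlinarith [sq_nonneg (|f x| - |h x|), sq_abs (f x), sq_abs (h x)]
  have expand : ∫ x, (f x + h x) ^ 2 ∂μ
      = ∫ x, f x ^ 2 ∂μ + (2 * ∫ x, f x * h x ∂μ + ∫ x, h x ^ 2 ∂μ) := by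
    calc ∫ x, (f x + h x) ^ 2 ∂μ
        = ∫ x, (f x ^ 2 + (2 * (f x * h x) + h x ^ 2)) ∂μ :=
          integral_congr_ae (Filter.Eventually.of_forall fun x => by ring)
      _ = ∫ x, f x ^ 2 ∂μ + ∫ x, (2 * (f x * h x) + h x ^ 2) ∂μ :=
          integral_add hf2 ((hfh.const_mul 2).add hh2)
      _ = _ := by rw [integral_add (hfh.const_mul 2) hh2, integral_const_mul]
  have hA : (0:ℝ) ≤ ∫ x, f x ^ 2 ∂μ := integral_nonneg fun x => sq_nonneg _
  have hB : (0:ℝ) ≤ ∫ x, h x ^ 2 ∂μ := integral_nonneg fun x => sq_nonneg _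
  have hcs := aux_cauchy hf hh
  have hle : ∫ x, (f x + h x) ^ 2 ∂μ
      ≤ (Real.sqrt (∫ x, f x ^ 2 ∂μ) + Real.sqrt (∫ x, h x ^ 2 ∂μ)) ^ 2 := by
    rw [expand, add_sq, Real.sq_sqrt hA, Real.sq_sqrt hB]
    nlinarith [hcs]
  calc Real.sqrt (∫ x, (f x + h x) ^ 2 ∂μ)
      ≤ Real.sqrt ((Real.sqrt (∫ x, f x ^ 2 ∂μ) + Real.sqrt (∫ x, h x ^ 2 ∂μ)) ^ 2) :=
        Real.sqrt_le_sqrt hle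
    _ = _ := Real.sqrt_sq (by positivity)

lemma base_cont {p q r s : ℝ} (hqr : q < r) :
    ContinuousOn (fun z : ℝ × ℝ => ((z.2 - z.1)⁻¹) ^ 2) (Icc p q ×ˢ Icc r s) := by
  refine (ContinuousOn.inv₀ (by fun_prop) ?_).pow 2
  rintro ⟨x, y⟩ ⟨hx, hy⟩
  simp only
  have : x ≤ q := hx.2
  have : r ≤ y := hy.1
  intro h
  nlinarith

lemma base_integrable {p q r s : ℝ} (hqr : q < r) :
    IntegrableOn (fun z : ℝ × ℝ => ((z.2 - z.1)⁻¹) ^ 2) (Icc p q ×ˢ Icc r s) volume :=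
  (base_cont hqr).integrableOn_compact (isCompact_Icc.prod isCompact_Icc)

lemma inner_int {x r s : ℝ} (hxr : x < r) (hrs : r < s) :
    ∫ y in Icc r s, ((y - x)⁻¹) ^ 2 = (r - x)⁻¹ - (s - x)⁻¹ := by
  rw [integral_Icc_eq_integral_Ioc, ← intervalIntegral.integral_of_le hrs.le]
  have hd : ∀ t ∈ Set.uIcc r s, HasDerivAt (fun y : ℝ => -(y - x)⁻¹) (((t - x)⁻¹) ^ 2) t := by
    intro t ht
    rw [Set.uIcc_of_le hrs.le] at ht
    have hne : t - x ≠ 0 := by have := ht.1; intro h; nlinarith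
    have h1 : HasDerivAt (fun y : ℝ => y - x) 1 t := (hasDerivAt_id t).sub_const x
    have h2 := (h1.inv hne).neg
    exact h2.congr_deriv (by rw [neg_div, neg_neg, one_div, inv_pow])
  have hi : IntervalIntegrable (fun y : ℝ => ((y - x)⁻¹) ^ 2) volume r s := by
    apply ContinuousOn.intervalIntegrable
    rw [Set.uIcc_of_le hrs.le]
    refine (ContinuousOn.inv₀ (by fun_prop) ?_).pow 2
    intro t ht
    have := ht.1; intro h; nlinarith
  rw [intervalIntegral.integral_eq_sub_of_hasDerivAt hd hi]; ring

lemma outer_int {p q r s : ℝ} (hpq : p < q) (hqr : q < r) (hrs : r < s) :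
    ∫ x in Icc p q, ((r - x)⁻¹ - (s - x)⁻¹)
      = Real.log (((r - p) * (s - q)) / ((s - p) * (r - q))) := by
  rw [integral_Icc_eq_integral_Ioc, ← intervalIntegral.integral_of_le hpq.le]
  have : ∫ x in p..q, ((r - x)⁻¹ - (s - x)⁻¹)
      = (fun x : ℝ => Real.log (s - x) - Real.log (r - x)) q
        - (fun x : ℝ => Real.log (s - x) - Real.log (r - x)) p := by
    have hd : ∀ t ∈ Set.uIcc p q, HasDerivAt (fun x : ℝ => Real.log (s - x) - Real.log (r - x))
        ((r - t)⁻¹ - (s - t)⁻¹) t := by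
      intro t ht
      rw [Set.uIcc_of_le hpq.le] at ht
      have hrt : (0:ℝ) < r - t := by have := ht.2; nlinarith
      have hst : (0:ℝ) < s - t := by have := ht.2; nlinarith
      have h1 : HasDerivAt (fun x : ℝ => s - x) (-1) t := by
        simpa using (hasDerivAt_id t).const_sub s
      have h2 : HasDerivAt (fun x : ℝ => r - x) (-1) t := by
        simpa using (hasDerivAt_id t).const_sub r
      have h3 := (h1.log hst.ne').sub (h2.log hrt.ne')
      exact h3.congr_deriv (by ring)
    have hi : IntervalIntegrable (fun x : ℝ => (r - x)⁻¹ - (s - x)⁻¹) volume p q := by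
      apply ContinuousOn.intervalIntegrable
      rw [Set.uIcc_of_le hpq.le]
      refine ContinuousOn.sub (ContinuousOn.inv₀ (by fun_prop) ?_) (ContinuousOn.inv₀ (by fun_prop) ?_) <;>
        · intro t ht
          have := ht.2; intro h; nlinarith
    exact intervalIntegral.integral_eq_sub_of_hasDerivAt hd hi
  rw [this]
  simp only
  have h1 : (0:ℝ) < r - p := by nlinarith
  have h2 : (0:ℝ) < s - p := by nlinarith
  have h3 : (0:ℝ) < r - q := by nlinarith
  have h4 : (0:ℝ) < s - q := by nlinarith
  rw [Real.log_div (by positivity) (by positivity), Real.log_mul h1.ne' h4.ne',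
    Real.log_mul h2.ne' h3.ne']
  ring

lemma base_value {p q r s : ℝ} (hpq : p < q) (hqr : q < r) (hrs : r < s) :
    ∫ z in Icc p q ×ˢ Icc r s, ((z.2 - z.1)⁻¹) ^ 2
      = Real.log (((r - p) * (s - q)) / ((s - p) * (r - q))) := by
  have hint := base_integrable (p := p) (q := q) (r := r) (s := s) hqr
  rw [Measure.volume_eq_prod] at hint ⊢
  rw [setIntegral_prod _ hint]
  have : ∀ x ∈ Icc p q, (∫ y in Icc r s, ((y - x)⁻¹) ^ 2) = (r - x)⁻¹ - (s - x)⁻¹ := by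
    intro x hx
    exact inner_int (lt_of_le_of_lt hx.2 hqr) hrs
  rw [setIntegral_congr_fun measurableSet_Icc this]
  exact outer_int hpq hqr hrs

lemma map1 (g : ℝ → ℝ) (hg : ContDiff ℝ 1 g) {p q : ℝ} (hpq : p ≤ q)
    (hmono : StrictMonoOn g (Icc p q)) :
    Measure.map g ((volume.restrict (Icc p q)).withDensity
        fun x => ENNReal.ofReal |deriv g x|)
      = volume.restrict (Icc (g p) (g q)) := by
  have himg : g '' Icc p q = Icc (g p) (g q) := by
    apply Subset.antisymm
    · rintro _ ⟨x, hx, rfl⟩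
      exact ⟨hmono.monotoneOn ⟨le_rfl, hpq⟩ hx hx.1, hmono.monotoneOn hx ⟨hpq, le_rfl⟩ hx.2⟩
    · exact intermediate_value_Icc hpq hg.continuous.continuousOn
  have hdiff := hg.differentiable one_ne_zero
  have key := map_withDensity_abs_det_fderiv_eq_addHaar (volume : Measure ℝ)
    (measurableSet_Icc (a := p) (b := q)).nullMeasurableSet
    (f' := fun x => ContinuousLinearMap.toSpanSingleton ℝ (deriv g x))
    (fun x _ => ((hdiff x).hasDerivAt).hasDerivWithinAt.hasFDerivWithinAt)
    hmono.injOn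
  simp only [ContinuousLinearMap.det_toSpanSingleton] at key
  rw [himg] at key
  exact key

lemma aux_prod_withDensity {μ ν : Measure ℝ} [SigmaFinite μ] [SigmaFinite ν]
    {f h : ℝ → ℝ≥0∞} (hf : Measurable f) (hh : Measurable h)
    [SigmaFinite (μ.withDensity f)] [SigmaFinite (ν.withDensity h)] :
    (μ.withDensity f).prod (ν.withDensity h)
      = (μ.prod ν).withDensity (fun p => f p.1 * h p.2) := by
  refine Measure.prod_eq fun s t hs ht => ?_
  rw [withDensity_apply _ (hs.prod ht), ← Measure.prod_restrict,
    lintegral_prod_mul hf.aemeasurable hh.aemeasurable,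
    withDensity_apply _ hs, withDensity_apply _ ht]

lemma map2 (g : ℝ → ℝ) (hg : ContDiff ℝ 1 g) {a b c d : ℝ} (hab : a ≤ b) (hcd : c ≤ d)
    (hm1 : StrictMonoOn g (Icc a b)) (hm2 : StrictMonoOn g (Icc c d)) :
    Measure.map (Prod.map g g) ((volume.restrict (Icc a b ×ˢ Icc c d)).withDensity
        fun p => ENNReal.ofReal |deriv g p.1| * ENNReal.ofReal |deriv g p.2|)
      = volume.restrict (Icc (g a) (g b) ×ˢ Icc (g c) (g d)) := by
  have hdm : Measurable (fun x => ENNReal.ofReal |deriv g x|) :=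
    (hg.continuous_deriv le_rfl).measurable.abs.ennreal_ofReal
  rw [Measure.volume_eq_prod, ← Measure.prod_restrict, ← aux_prod_withDensity hdm hdm,
    ← Measure.map_prod_map _ _ hg.continuous.measurable hg.continuous.measurable,
    map1 g hg hab hm1, map1 g hg hcd hm2, Measure.prod_restrict, ← Measure.volume_eq_prod]

lemma aux_transfer {φ : ℝ × ℝ → ℝ × ℝ} (hφ : Measurable φ) {ν : Measure (ℝ × ℝ)}
    {Dnn : ℝ × ℝ → ℝ≥0} (hD : Measurable Dnn) {R : Set (ℝ × ℝ)}
    (M : Measure.map φ (ν.withDensity fun p => ((Dnn p : ℝ≥0∞))) = volume.restrict R)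
    {f : ℝ × ℝ → ℝ} (hfm : AEStronglyMeasurable f (volume.restrict R)) :
    (∫ z in R, f z = ∫ p, (Dnn p : ℝ) * f (φ p) ∂ν) ∧
      (IntegrableOn f R volume ↔ Integrable (fun p => (Dnn p : ℝ) * f (φ p)) ν) := by
  have hfm' : AEStronglyMeasurable f
      (Measure.map φ (ν.withDensity fun p => ((Dnn p : ℝ≥0∞)))) := by rw [M]; exact hfm
  constructor
  · have h1 : ∫ z in R, f z = ∫ z, f z ∂(Measure.map φ (ν.withDensity fun p => ((Dnn p : ℝ≥0∞)))) := by
      rw [M]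
    rw [h1, integral_map hφ.aemeasurable hfm',
      integral_withDensity_eq_integral_smul₀ hD.aemeasurable]
    simp [NNReal.smul_def]
  · have h2 : IntegrableOn f R volume
        ↔ Integrable f (Measure.map φ (ν.withDensity fun p => ((Dnn p : ℝ≥0∞)))) := by
      rw [M]; rfl
    rw [h2, integrable_map_measure hfm' hφ.aemeasurable,
      integrable_withDensity_iff_integrable_coe_smul₀ hD.aemeasurable]
    simp only [Function.comp, smul_eq_mul]


/-- **Cross-ratio distortion bound from the `L²` fixed-point equation.**
If `[a,b,c,d] = 2`, `g` is `C¹` with positive derivative on `[a,d]`, and `χ` is square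
integrable with `∫ χ² ≤ K²` and satisfies the fixed-point equation of the projective
cocycle a.e. on `[a,b] × [c,d]`, then
`[g a, g b, g c, g d] ≤ exp ( (√(log 2) + 2K)² )`. -/
theorem crossratio_bound_of_L2_fixed_point
    (a b c d : ℝ) (hab : a < b) (hbc : b < c) (hcd : c < d)
    (hcross : ((c - a) * (d - b)) / ((d - a) * (c - b)) = 2)
    (g : ℝ → ℝ) (hg : ContDiff ℝ 1 g) (hg' : ∀ x ∈ Set.Icc a d, 0 < deriv g x)
    (χ : ℝ × ℝ → ℝ) (hχmeas : Measurable χ)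
    (K : ℝ) (hK0 : 0 ≤ K)
    (hχint : Integrable (fun p : ℝ × ℝ => (χ p) ^ 2) volume)
    (hχK : (∫ p : ℝ × ℝ, (χ p) ^ 2) ≤ K ^ 2)
    (heq : ∀ᵐ p : ℝ × ℝ ∂(volume : Measure (ℝ × ℝ)),
      p ∈ Set.Icc a b ×ˢ Set.Icc c d →
        (1 / (g p.2 - g p.1) - χ (g p.1, g p.2)) ^ 2 * (deriv g p.1 * deriv g p.2)
          = (1 / (p.2 - p.1) - χ p) ^ 2) :
    ((g c - g a) * (g d - g b)) / ((g d - g a) * (g c - g b))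
      ≤ Real.exp ((Real.sqrt (Real.log 2) + 2 * K) ^ 2) := by
  have hbd : b ≤ d := (hbc.trans hcd).le
  have hac : a ≤ c := (hab.trans hbc).le
  have hmono : StrictMonoOn g (Icc a d) := by
    refine strictMonoOn_of_deriv_pos (convex_Icc a d) hg.continuous.continuousOn ?_
    intro x hx
    exact hg' x (interior_subset hx)
  have hm1 : StrictMonoOn g (Icc a b) := hmono.mono (Icc_subset_Icc le_rfl hbd)
  have hm2 : StrictMonoOn g (Icc c d) := hmono.mono (Icc_subset_Icc hac le_rfl)
  have mem_ad : ∀ x, a ≤ x → x ≤ d → x ∈ Icc a d := fun x h1 h2 => ⟨h1, h2⟩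
  have hgab : g a < g b := hmono (mem_ad a le_rfl (by linarith)) (mem_ad b hab.le hbd) hab
  have hgbc : g b < g c := hmono (mem_ad b hab.le hbd) (mem_ad c hac hcd.le) hbc
  have hgcd : g c < g d := hmono (mem_ad c hac hcd.le) (mem_ad d (by linarith) le_rfl) hcd
  set s : Set (ℝ × ℝ) := Icc a b ×ˢ Icc c d with hs_def
  set R : Set (ℝ × ℝ) := Icc (g a) (g b) ×ˢ Icc (g c) (g d) with hR_def
  set μI : Measure (ℝ × ℝ) := volume.restrict s with hμI_def
  have hs_meas : MeasurableSet s := (measurableSet_Icc.prod measurableSet_Icc)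
  have hgc : Continuous g := hg.continuous
  have hg'c : Continuous (deriv g) := hg.continuous_deriv le_rfl
  set Dnn : ℝ × ℝ → ℝ≥0 := fun p => (|deriv g p.1|).toNNReal * (|deriv g p.2|).toNNReal
    with hDnn_def
  have hD_meas : Measurable Dnn := by
    apply Measurable.mul
    · exact ((hg'c.comp continuous_fst).abs.measurable).real_toNNReal
    · exact ((hg'c.comp continuous_snd).abs.measurable).real_toNNReal
  have hDW : ∀ p : ℝ × ℝ, ((Dnn p : ℝ)) = |deriv g p.1| * |deriv g p.2| := by
    intro p
    simp [hDnn_def, Real.coe_toNNReal _ (abs_nonneg _)]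
  have hφ : Measurable (Prod.map g g) := hgc.measurable.prodMap hgc.measurable
  have M0 := map2 g hg hab.le hcd.le hm1 hm2
  have Mc : Measure.map (Prod.map g g) (μI.withDensity fun p => ((Dnn p : ℝ≥0∞)))
      = volume.restrict R := by
    have hdens : (fun p : ℝ × ℝ => ((Dnn p : ℝ≥0∞)))
        = fun p => ENNReal.ofReal |deriv g p.1| * ENNReal.ofReal |deriv g p.2| := by
      funext p
      simp [hDnn_def, ENNReal.coe_mul, ENNReal.ofReal]
    rw [hμI_def, hs_def, hR_def, hdens]
    exact M0
  set f₁ : ℝ × ℝ → ℝ := fun p => (g p.2 - g p.1)⁻¹ * Real.sqrt ((Dnn p : ℝ)) with hf₁_def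
  set f₂ : ℝ × ℝ → ℝ := fun p => χ (g p.1, g p.2) * Real.sqrt ((Dnn p : ℝ)) with hf₂_def
  set f₃ : ℝ × ℝ → ℝ := fun p => (p.2 - p.1)⁻¹ with hf₃_def
  -- transfer of the main term
  have hfm_main : AEStronglyMeasurable (fun z : ℝ × ℝ => ((z.2 - z.1)⁻¹) ^ 2)
      (volume.restrict R) :=
    (((measurable_snd.sub measurable_fst).inv).pow_const 2).aestronglyMeasurable
  obtain ⟨T1val, T1int⟩ := aux_transfer hφ hD_meas Mc hfm_main
  have e₁ : (fun p : ℝ × ℝ =>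
        (Dnn p : ℝ) * (((((Prod.map g g) p).2 - ((Prod.map g g) p).1)⁻¹) ^ 2))
      = fun p => f₁ p ^ 2 := by
    funext p
    simp only [Prod.map_snd, Prod.map_fst, hf₁_def]
    rw [mul_pow, Real.sq_sqrt (NNReal.coe_nonneg _)]
    ring
  have hI₁val : ∫ p, f₁ p ^ 2 ∂μI
      = Real.log (((g c - g a) * (g d - g b)) / ((g d - g a) * (g c - g b))) := by
    calc ∫ p, f₁ p ^ 2 ∂μI
        = ∫ p, (Dnn p : ℝ) * (((((Prod.map g g) p).2 - ((Prod.map g g) p).1)⁻¹) ^ 2) ∂μI := by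
          rw [e₁]
      _ = Real.log (((g c - g a) * (g d - g b)) / ((g d - g a) * (g c - g b))) := by
          rw [← T1val, hR_def]
          exact base_value hgab hgbc hgcd
  have hI₁int : Integrable (fun p => f₁ p ^ 2) μI := by
    have h := T1int.mp (base_integrable (p := g a) (q := g b) (r := g c) (s := g d) hgbc)
    exact e₁ ▸ h
  -- transfer of the χ² term
  have hfm_chi : AEStronglyMeasurable (fun z : ℝ × ℝ => χ z ^ 2) (volume.restrict R) :=
    (hχmeas.pow_const 2).aestronglyMeasurable
  obtain ⟨T2val, T2int⟩ := aux_transfer hφ hD_meas Mc hfm_chi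
  have e₂ : (fun p : ℝ × ℝ => (Dnn p : ℝ) * (χ ((Prod.map g g) p) ^ 2))
      = fun p => f₂ p ^ 2 := by
    funext p
    have hpm : Prod.map g g p = (g p.1, g p.2) := rfl
    simp only [hf₂_def, hpm]
    rw [mul_pow, Real.sq_sqrt (NNReal.coe_nonneg _)]
    ring
  have hχnonneg : (0:ℝ×ℝ→ℝ) ≤ᵐ[volume] fun p => χ p ^ 2 :=
    Filter.Eventually.of_forall fun p => sq_nonneg _
  have hI₂val : ∫ p, f₂ p ^ 2 ∂μI ≤ K ^ 2 := by
    calc ∫ p, f₂ p ^ 2 ∂μI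
        = ∫ p, (Dnn p : ℝ) * (χ ((Prod.map g g) p) ^ 2) ∂μI := by rw [e₂]
      _ = ∫ z in R, χ z ^ 2 := T2val.symm
      _ ≤ ∫ p : ℝ × ℝ, χ p ^ 2 := setIntegral_le_integral hχint hχnonneg
      _ ≤ K ^ 2 := hχK
  have hI₂int : Integrable (fun p => f₂ p ^ 2) μI := by
    have h := T2int.mp hχint.integrableOn
    exact e₂ ▸ h
  -- the base terms
  have hI₃val : ∫ p, f₃ p ^ 2 ∂μI = Real.log 2 := by
    have := base_value hab hbc hcd
    rw [hcross] at this
    rw [hμI_def, hs_def]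
    exact this
  have hI₃int : Integrable (fun p => f₃ p ^ 2) μI := base_integrable hbc
  have hI₄int : Integrable (fun p => χ p ^ 2) μI := hχint.integrableOn
  have hI₄val : ∫ p, χ p ^ 2 ∂μI ≤ K ^ 2 :=
    le_trans (setIntegral_le_integral hχint hχnonneg) hχK
  -- measurability / MemLp
  have hm₁ : AEStronglyMeasurable f₁ μI := by
    apply Measurable.aestronglyMeasurable
    exact (((hgc.comp continuous_snd).sub (hgc.comp continuous_fst)).measurable.inv).mul
      ((hD_meas.coe_nnreal_real).sqrt)
  have hm₂ : AEStronglyMeasurable f₂ μI := by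
    apply Measurable.aestronglyMeasurable
    exact (hχmeas.comp (hgc.measurable.comp measurable_fst |>.prod
      (hgc.measurable.comp measurable_snd))).mul ((hD_meas.coe_nnreal_real).sqrt)
  have hm₃ : AEStronglyMeasurable f₃ μI :=
    ((measurable_snd.sub measurable_fst).inv).aestronglyMeasurable
  have hm₄ : AEStronglyMeasurable (fun p : ℝ × ℝ => χ p) μI := hχmeas.aestronglyMeasurable
  have hL₁ : MemLp f₁ 2 μI := (memLp_two_iff_integrable_sq hm₁).mpr hI₁int
  have hL₂ : MemLp f₂ 2 μI := (memLp_two_iff_integrable_sq hm₂).mpr hI₂int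
  have hL₃ : MemLp f₃ 2 μI := (memLp_two_iff_integrable_sq hm₃).mpr hI₃int
  have hL₄ : MemLp (fun p : ℝ × ℝ => χ p) 2 μI :=
    (memLp_two_iff_integrable_sq hm₄).mpr hI₄int
  -- the fixed-point equation, a.e. on μI
  have heqI : ∀ᵐ p ∂μI, (f₁ p - f₂ p) ^ 2 = (f₃ p - χ p) ^ 2 := by
    have h1 : ∀ᵐ p ∂μI, p ∈ s → (1 / (g p.2 - g p.1) - χ (g p.1, g p.2)) ^ 2
        * (deriv g p.1 * deriv g p.2) = (1 / (p.2 - p.1) - χ p) ^ 2 :=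
      ae_restrict_of_ae heq
    have h2 : ∀ᵐ p ∂μI, p ∈ s := ae_restrict_mem hs_meas
    filter_upwards [h1, h2] with p hp hmem
    have hp' := hp hmem
    have hmem1 : p.1 ∈ Icc a b := hmem.1
    have hmem2 : p.2 ∈ Icc c d := hmem.2
    have hd1 : 0 < deriv g p.1 := hg' _ ⟨hmem1.1, hmem1.2.trans hbd⟩
    have hd2 : 0 < deriv g p.2 := hg' _ ⟨le_trans hac hmem2.1, hmem2.2⟩
    have hW : ((Dnn p : ℝ)) = deriv g p.1 * deriv g p.2 := by
      rw [hDW, abs_of_pos hd1, abs_of_pos hd2]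
    have hfac : f₁ p - f₂ p = ((g p.2 - g p.1)⁻¹ - χ (g p.1, g p.2)) * Real.sqrt ((Dnn p : ℝ)) := by
      simp only [hf₁_def, hf₂_def]; ring
    rw [hfac, mul_pow, Real.sq_sqrt (NNReal.coe_nonneg _), hW, hf₃_def]
    simp only [one_div] at hp'
    exact hp'
  -- Minkowski chain
  have hsum12 : Real.sqrt (∫ p, f₁ p ^ 2 ∂μI)
      ≤ Real.sqrt (∫ p, (f₁ p - f₂ p) ^ 2 ∂μI) + Real.sqrt (∫ p, f₂ p ^ 2 ∂μI) := by
    have h := aux_minkowski (hL₁.sub hL₂) hL₂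
    simpa [sub_add_cancel] using h
  have hmid : ∫ p, (f₁ p - f₂ p) ^ 2 ∂μI = ∫ p, (f₃ p - χ p) ^ 2 ∂μI :=
    integral_congr_ae heqI
  have hsum34 : Real.sqrt (∫ p, (f₃ p - χ p) ^ 2 ∂μI)
      ≤ Real.sqrt (∫ p, f₃ p ^ 2 ∂μI) + Real.sqrt (∫ p, χ p ^ 2 ∂μI) := by
    have h := aux_minkowski hL₃ hL₄.neg
    simp only [Pi.neg_apply, ← sub_eq_add_neg, neg_sq] at h
    simpa using h
  have hs₂ : Real.sqrt (∫ p, f₂ p ^ 2 ∂μI) ≤ K := by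
    calc Real.sqrt (∫ p, f₂ p ^ 2 ∂μI) ≤ Real.sqrt (K ^ 2) := Real.sqrt_le_sqrt hI₂val
      _ = K := Real.sqrt_sq hK0
  have hs₄ : Real.sqrt (∫ p, χ p ^ 2 ∂μI) ≤ K := by
    calc Real.sqrt (∫ p, χ p ^ 2 ∂μI) ≤ Real.sqrt (K ^ 2) := Real.sqrt_le_sqrt hI₄val
      _ = K := Real.sqrt_sq hK0
  have hfinal : Real.sqrt (∫ p, f₁ p ^ 2 ∂μI) ≤ Real.sqrt (Real.log 2) + 2 * K := by
    calc Real.sqrt (∫ p, f₁ p ^ 2 ∂μI)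
        ≤ Real.sqrt (∫ p, (f₁ p - f₂ p) ^ 2 ∂μI) + Real.sqrt (∫ p, f₂ p ^ 2 ∂μI) := hsum12
      _ = Real.sqrt (∫ p, (f₃ p - χ p) ^ 2 ∂μI) + Real.sqrt (∫ p, f₂ p ^ 2 ∂μI) := by
          rw [hmid]
      _ ≤ (Real.sqrt (∫ p, f₃ p ^ 2 ∂μI) + Real.sqrt (∫ p, χ p ^ 2 ∂μI))
            + Real.sqrt (∫ p, f₂ p ^ 2 ∂μI) := by gcongr
      _ ≤ (Real.sqrt (Real.log 2) + K) + K := by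
          rw [hI₃val]; gcongr
      _ = Real.sqrt (Real.log 2) + 2 * K := by ring
  -- conclude
  have hlog_nonneg : 0 ≤ ∫ p, f₁ p ^ 2 ∂μI := integral_nonneg fun p => sq_nonneg _
  have hlog_le : Real.log (((g c - g a) * (g d - g b)) / ((g d - g a) * (g c - g b)))
      ≤ (Real.sqrt (Real.log 2) + 2 * K) ^ 2 := by
    rw [← hI₁val]
    calc ∫ p, f₁ p ^ 2 ∂μI = Real.sqrt (∫ p, f₁ p ^ 2 ∂μI) ^ 2 :=
          (Real.sq_sqrt hlog_nonneg).symm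
      _ ≤ (Real.sqrt (Real.log 2) + 2 * K) ^ 2 := by
          have h0 : (0:ℝ) ≤ Real.sqrt (∫ p, f₁ p ^ 2 ∂μI) := Real.sqrt_nonneg _
          have h1 : (0:ℝ) ≤ Real.sqrt (Real.log 2) + 2 * K := by
            have := Real.sqrt_nonneg (Real.log 2); linarith
          exact pow_le_pow_left₀ h0 hfinal 2
  have hCRpos : 0 < ((g c - g a) * (g d - g b)) / ((g d - g a) * (g c - g b)) := by
    have h1 : 0 < g c - g a := by linarith
    have h2 : 0 < g d - g b := by linarith
    have h3 : 0 < g d - g a := by linarith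
    have h4 : 0 < g c - g b := by linarith
    positivity
  calc ((g c - g a) * (g d - g b)) / ((g d - g a) * (g c - g b))
      = Real.exp (Real.log (((g c - g a) * (g d - g b)) / ((g d - g a) * (g c - g b)))) :=
        (Real.exp_log hCRpos).symm
    _ ≤ Real.exp ((Real.sqrt (Real.log 2) + 2 * K) ^ 2) := Real.exp_le_exp.mpr hlog_le
end

section
/- There exists a constant C > 0 with the following property. Let F : ℝ → ℝ be any C² function with F(x+1) = F(x) + 1, deriv F(x) > 0 for all x, and sup_x |deriv F(x) − 1| ≤ 1/2, and let f : AddCircle (1:ℝ) → AddCircle (1:ℝ) be the induced circle map. Then the function c : AddCircle 1 × AddCircle 1 → ℝ defined for x ≠ y by c(x,y) = √(deriv F(x̃) · deriv F(ỹ)) / dist(f(x), f(y)) − 1/dist(x,y) (where x̃, ỹ ∈ ℝ are any representatives of x, y; this is well defined since deriv F is 1-periodic) is square integrable with respect to the Haar probability measure on AddCircle 1 × AddCircle 1, and its L² norm satisfies ‖c‖_{L²} ≤ C · sup_x |(deriv (deriv F))(x)|. -/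
open MeasureTheory Set

private lemma sqrt_mul_between {a b : ℝ} (ha : 0 < a) (hb : 0 < b) :
    |Real.sqrt (a * b) - a| ≤ |b - a| := by
  rcases le_total a b with h | h
  · have h1 : a ≤ Real.sqrt (a * b) := by
      nlinarith [Real.sq_sqrt (by positivity : (0:ℝ) ≤ a * b), Real.sqrt_nonneg (a * b)]
    have h2 : Real.sqrt (a * b) ≤ b := by
      rw [show a * b = b * a by ring]
      calc Real.sqrt (b * a) ≤ Real.sqrt (b * b) := Real.sqrt_le_sqrt (by nlinarith)
        _ = b := Real.sqrt_mul_self hb.le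
    rw [abs_of_nonneg (by linarith), abs_of_nonneg (by linarith)]; linarith
  · have h1 : Real.sqrt (a * b) ≤ a := by
      calc Real.sqrt (a * b) ≤ Real.sqrt (a * a) := Real.sqrt_le_sqrt (by nlinarith)
        _ = a := Real.sqrt_mul_self ha.le
    have h2 : b ≤ Real.sqrt (a * b) := by
      nlinarith [Real.sq_sqrt (by positivity : (0:ℝ) ≤ a * b), Real.sqrt_nonneg (a * b)]
    rw [abs_of_nonpos (by linarith), abs_of_nonpos (by linarith)]; linarith

private lemma lin_bound (F : ℝ → ℝ) (hF : Differentiable ℝ F) {K : ℝ}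
    (hK : ∀ t, |deriv F t| ≤ K) (a b : ℝ) : |F b - F a| ≤ K * |b - a| := by
  have := Convex.norm_image_sub_le_of_norm_deriv_le (f := F)
    (fun x _ => hF x) (fun x _ => by simpa using hK x)
    convex_univ (mem_univ a) (mem_univ b)
  simpa [Real.norm_eq_abs] using this

private lemma mono_bound (F : ℝ → ℝ) (hF : Differentiable ℝ F)
    (hlo : ∀ t, (1:ℝ)/2 ≤ deriv F t) {x y : ℝ} (h : x ≤ y) :
    (1/2) * (y - x) ≤ F y - F x := by
  have hmono : Monotone (fun t => F t - (1/2) * t) := by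
    have hder : ∀ t, 0 ≤ deriv (fun t => F t - (1/2) * t) t := by
      intro t
      have hD : deriv (fun t : ℝ => (1/2 : ℝ) * t) t = 1/2 := by
        simpa using ((hasDerivAt_id t).const_mul (1/2 : ℝ)).deriv
      rw [deriv_fun_sub (hF t) (by fun_prop), hD]
      linarith [hlo t]
    exact monotone_of_deriv_nonneg (by fun_prop) hder
  have := hmono h
  simp only at this
  linarith

private lemma taylor_bound (F : ℝ → ℝ) (hF : Differentiable ℝ F) {M : ℝ}
    (hLip : ∀ s t : ℝ, |deriv F s - deriv F t| ≤ M * |s - t|) (hM : 0 ≤ M) (a b : ℝ) :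
    |F b - F a - deriv F a * (b - a)| ≤ M * |b - a| * |b - a| := by
  have this := Convex.norm_image_sub_le_of_norm_deriv_le (f := fun t => F t - deriv F a * t)
    (s := uIcc a b) (fun x _ => (hF x).sub ((differentiable_id.const_mul _) x))
    (fun x hx => by
      have hd : deriv (fun t => F t - deriv F a * t) x = deriv F x - deriv F a := by
        rw [deriv_fun_sub (hF x) (by fun_prop)]
        have h2 : deriv (fun t : ℝ => deriv F a * t) x = deriv F a := by
          simpa using ((hasDerivAt_id x).const_mul (deriv F a)).deriv
        rw [h2]
      rw [Real.norm_eq_abs, hd]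
      calc |deriv F x - deriv F a| ≤ M * |x - a| := hLip x a
        _ ≤ M * |b - a| := mul_le_mul_of_nonneg_left (abs_sub_left_of_mem_uIcc hx) hM)
    (convex_uIcc a b) left_mem_uIcc right_mem_uIcc
  rw [Real.norm_eq_abs, Real.norm_eq_abs] at this
  have heq : F b - F a - deriv F a * (b - a) = (F b - deriv F a * b) - (F a - deriv F a * a) := by
    ring
  rw [heq]
  exact this

private lemma abs_sub_round_of_abs_le {t : ℝ} (h : |t| ≤ 1/2) : |t - round t| = |t| := by
  rcases eq_or_lt_of_le (abs_le.mp h).2 with heq | hlt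
  · rw [heq, show round ((1:ℝ)/2) = 1 by norm_num [round_eq]]
    norm_num
  · have h0 : round t = 0 := by
      rw [round_eq, Int.floor_eq_zero_iff]
      constructor
      · linarith [(abs_le.mp h).1]
      · simpa using by linarith
    simp [h0]

private lemma key_est (F : ℝ → ℝ) {M : ℝ} (hM : 0 ≤ M)
    (hdF : Differentiable ℝ F)
    (hLip : ∀ a b : ℝ, |deriv F a - deriv F b| ≤ M * |a - b|)
    (hone : ∀ t, |deriv F t - 1| ≤ M)
    (hlo : ∀ t, (1:ℝ)/2 ≤ deriv F t) (hhi : ∀ t, deriv F t ≤ 3/2)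
    {x y : ℝ} (hxy : x < y) (hdle : y - x ≤ 1/2) :
    |Real.sqrt (deriv F x * deriv F y) / |(F y - F x) - round (F y - F x)| - 1 / (y - x)|
      ≤ 22 * M := by
  set d : ℝ := y - x with hd_def
  set Δ : ℝ := F y - F x with hΔ_def
  set s : ℝ := Real.sqrt (deriv F x * deriv F y) with hs_def
  have hd0 : 0 < d := by simp only [hd_def]; linarith
  have hΔlo : d/2 ≤ Δ := by
    have := mono_bound F hdF hlo hxy.le
    simp only [hd_def, hΔ_def]; linarith
  have hΔpos : 0 < Δ := by linarith
  have hΔhi : Δ ≤ 3/2 * d := by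
    have h32 : ∀ t, |deriv F t| ≤ 3/2 := fun t => by
      rw [abs_le]; constructor <;> [linarith [hlo t]; exact hhi t]
    have := lin_bound F hdF h32 x y
    rw [abs_of_pos hΔpos, abs_of_pos hd0] at this
    exact this
  have hΔhi2 : Δ ≤ (1 + M) * d := by
    have h1M : ∀ t, |deriv F t| ≤ 1 + M := fun t => by
      have := hone t
      rw [abs_le] at this ⊢
      constructor <;> linarith [this.1, this.2]
    have := lin_bound F hdF h1M x y
    rw [abs_of_pos hΔpos, abs_of_pos hd0] at this
    exact this
  have hΔ34 : Δ ≤ 3/4 := by linarith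
  -- bound on |s*d - Δ|
  have hsx : |s - deriv F x| ≤ M * d := by
    have h1 := sqrt_mul_between (hlo x |>.trans_lt' (by norm_num)) (hlo y |>.trans_lt' (by norm_num))
    have h2 := hLip y x
    have : |y - x| = d := abs_of_pos hd0
    rw [this] at h2
    exact le_trans h1 h2
  have hNmain : |s * d - Δ| ≤ 2 * M * d^2 := by
    have ht := taylor_bound F hdF hLip hM x y
    rw [show |y - x| = d from abs_of_pos hd0] at ht
    have h1 : |s * d - deriv F x * d| ≤ M * d * d := by
      rw [show s * d - deriv F x * d = (s - deriv F x) * d by ring, abs_mul,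
        abs_of_pos hd0]
      exact mul_le_mul_of_nonneg_right hsx hd0.le
    have h2 : |deriv F x * d - Δ| ≤ M * d * d := by
      have : deriv F x * d - Δ = -(F y - F x - deriv F x * (y - x)) := by
        simp only [hd_def, hΔ_def]; ring
      rw [this, abs_neg]
      exact ht
    calc |s * d - Δ| ≤ |s * d - deriv F x * d| + |deriv F x * d - Δ| := abs_sub_le _ _ _
      _ ≤ M * d * d + M * d * d := add_le_add h1 h2
      _ = 2 * M * d^2 := by ring
  -- round Δ is 0 or 1
  have hr01 : round Δ = 0 ∨ round Δ = 1 := by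
    have h1 : (0:ℤ) ≤ round Δ := by
      rw [round_eq]
      exact Int.floor_nonneg.mpr (by linarith)
    have h2 : round Δ < 2 := by
      rw [round_eq]
      have : Δ + 1/2 < 2 := by linarith
      exact Int.floor_lt.mpr (by exact_mod_cast this)
    omega
  set D : ℝ := |Δ - round Δ| with hD_def
  have hmain : d/2 ≤ D ∧ |s * d - D| ≤ 11 * M * d^2 := by
    rcases hr01 with hr | hr
    · have hD : D = Δ := by rw [hD_def, hr]; simpa using abs_of_pos hΔpos
      refine ⟨by rw [hD]; exact hΔlo, ?_⟩
      rw [hD]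
      calc |s * d - Δ| ≤ 2 * M * d^2 := hNmain
        _ ≤ 11 * M * d^2 := by nlinarith
    · have hΔhalf : 1/2 ≤ Δ := by
        have : (1:ℤ) ≤ ⌊Δ + 1/2⌋ := by rw [← round_eq, hr]
        have := Int.le_floor.mp this
        push_cast at this
        linarith
      have hD : D = 1 - Δ := by
        rw [hD_def, hr]
        push_cast
        rw [abs_of_nonpos (by linarith)]
        ring
      have hd13 : 1/3 ≤ d := by nlinarith
      refine ⟨by rw [hD]; linarith, ?_⟩
      have hM9 : M ≤ 9 * M * d^2 := by nlinarith
      have h2Δ : 2 * Δ - 1 ≤ M := by nlinarith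
      calc |s * d - D| ≤ |s * d - Δ| + |Δ - D| := abs_sub_le _ _ _
        _ ≤ 2 * M * d^2 + (2 * Δ - 1) := by
            refine add_le_add hNmain ?_
            rw [hD, show Δ - (1 - Δ) = 2*Δ - 1 by ring, abs_of_nonneg (by linarith)]
        _ ≤ 2 * M * d^2 + 9 * M * d^2 := by linarith
        _ = 11 * M * d^2 := by ring
  obtain ⟨hDlo, hN⟩ := hmain
  have hDpos : 0 < D := by linarith
  have hrw : s / D - 1 / d = (s * d - D) / (D * d) := by
    field_simp
  rw [hrw, abs_div, abs_of_pos (by positivity : (0:ℝ) < D * d)]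
  rw [div_le_iff₀ (by positivity)]
  have hDd : d^2/2 ≤ D * d := by nlinarith
  calc |s * d - D| ≤ 11 * M * d^2 := hN
    _ = 22 * M * (d^2/2) := by ring
    _ ≤ 22 * M * (D * d) := mul_le_mul_of_nonneg_left hDd (by linarith : (0:ℝ) ≤ 22 * M)

private lemma dist_coe_addCircle (a b : ℝ) :
    dist (a : AddCircle (1:ℝ)) (b : AddCircle (1:ℝ)) = |(a - b) - round (a - b)| := by
  rw [dist_eq_norm]
  have h : (a : AddCircle (1:ℝ)) - (b : AddCircle (1:ℝ)) = ((a - b : ℝ) : AddCircle (1:ℝ)) := by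
    norm_cast
  rw [h, AddCircle.norm_eq]
  simp

/-- **Uniform `L²` estimate for the projective cocycle.**
There is a constant `C > 0` such that for every lift `F` of a `C²` circle diffeomorphism
with `|F' - 1| ≤ 1/2` everywhere, the projective cocycle
`c(x,y) = √(F'(x̃) F'(ỹ)) / dist (f x) (f y) - 1 / dist x y` on the torus is square
integrable and `‖c‖_{L²} ≤ C · sup |F''|`. -/
theorem projective_cocycle_L2_estimate :
    ∃ C : ℝ, 0 < C ∧
      ∀ F : ℝ → ℝ, ContDiff ℝ 2 F → (∀ x : ℝ, F (x + 1) = F x + 1) →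
        (∀ x : ℝ, 0 < deriv F x) → (∀ x : ℝ, |deriv F x - 1| ≤ 1 / 2) →
        ∀ f : AddCircle (1 : ℝ) → AddCircle (1 : ℝ),
          (∀ x : ℝ, f (x : AddCircle (1 : ℝ)) = ((F x : ℝ) : AddCircle (1 : ℝ))) →
        ∀ c : AddCircle (1 : ℝ) × AddCircle (1 : ℝ) → ℝ,
          (∀ x y : ℝ, (x : AddCircle (1 : ℝ)) ≠ (y : AddCircle (1 : ℝ)) →
            c (↑x, ↑y)
              = Real.sqrt (deriv F x * deriv F y)
                  / dist (f (x : AddCircle (1 : ℝ))) (f (y : AddCircle (1 : ℝ)))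
                - 1 / dist (x : AddCircle (1 : ℝ)) (y : AddCircle (1 : ℝ))) →
        MemLp c 2 (volume : Measure (AddCircle (1 : ℝ) × AddCircle (1 : ℝ))) ∧
          eLpNorm c 2 (volume : Measure (AddCircle (1 : ℝ) × AddCircle (1 : ℝ)))
            ≤ ENNReal.ofReal (C * ⨆ x : ℝ, |deriv (deriv F) x|) := by
  refine ⟨22, by norm_num, ?_⟩
  intro F hF hF1 hFpos hFhalf f hf c hc
  -- basic differentiability facts
  have hdF : Differentiable ℝ F := hF.differentiable (by norm_num)
  have h1d : ContDiff ℝ 1 (deriv F) :=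
    ((contDiff_succ_iff_deriv (n := 1) (f := F)).mp (by norm_num; exact hF)).2.2
  have hdF' : Differentiable ℝ (deriv F) := h1d.differentiable one_ne_zero
  have hcF'' : Continuous (deriv (deriv F)) := (contDiff_one_iff_deriv.mp h1d).2
  -- periodicity of deriv F and deriv (deriv F)
  have hperF' : Function.Periodic (deriv F) 1 := by
    intro x
    have h1 : deriv (fun y => F (y + 1)) x = deriv F (x + 1) := by
      simpa using deriv_comp_add_const F 1 x
    rw [← h1, funext hF1]
    simp
  have hperF'' : Function.Periodic (deriv (deriv F)) 1 := by
    intro x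
    have h1 : deriv (fun y => deriv F (y + 1)) x = deriv (deriv F) (x + 1) := by
      simpa using deriv_comp_add_const (deriv F) 1 x
    rw [← h1, funext hperF']
  -- the sup of |F''|
  set M : ℝ := ⨆ x : ℝ, |deriv (deriv F) x| with hM_def
  obtain ⟨K, hK⟩ := (isCompact_Icc (a := (0:ℝ)) (b := 1)).exists_bound_of_continuousOn
    hcF''.continuousOn
  have hbdd : ∀ x : ℝ, |deriv (deriv F) x| ≤ K := by
    intro x
    have hper := hperF''.sub_int_mul_eq (x := x) ⌊x⌋
    rw [mul_one] at hper
    have hmem : x - ⌊x⌋ ∈ Icc (0:ℝ) 1 := by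
      constructor
      · linarith [Int.floor_le x]
      · linarith [Int.lt_floor_add_one x]
    have := hK _ hmem
    rw [Real.norm_eq_abs] at this
    rw [← hper]
    exact this
  have hBdd : BddAbove (Set.range fun x : ℝ => |deriv (deriv F) x|) :=
    ⟨K, by rintro _ ⟨x, rfl⟩; exact hbdd x⟩
  have hM : ∀ x : ℝ, |deriv (deriv F) x| ≤ M := fun x => le_ciSup hBdd x
  have hM0 : 0 ≤ M := le_trans (abs_nonneg _) (hM 0)
  -- Lipschitz bound on deriv F
  have hLip : ∀ a b : ℝ, |deriv F a - deriv F b| ≤ M * |a - b| := by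
    intro a b
    have := Convex.norm_image_sub_le_of_norm_deriv_le (f := deriv F)
      (fun x _ => hdF' x) (fun x _ => by simpa using hM x)
      convex_univ (mem_univ b) (mem_univ a)
    simpa [Real.norm_eq_abs] using this
  -- F' takes value 1 somewhere, hence |F' - 1| ≤ M
  have hone : ∀ t : ℝ, |deriv F t - 1| ≤ M := by
    obtain ⟨t₀, ht₀, hslope⟩ := exists_deriv_eq_slope F one_pos hF.continuous.continuousOn
      (hdF.differentiableOn)
    have hFt₀ : deriv F t₀ = 1 := by
      rw [hslope]
      have := hF1 0
      rw [zero_add] at this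
      rw [this]; ring
    intro t
    have hper := hperF'.sub_int_mul_eq (x := t) ⌊t⌋
    rw [mul_one] at hper
    have hmem : t - ⌊t⌋ ∈ Icc (0:ℝ) 1 := by
      constructor
      · linarith [Int.floor_le t]
      · linarith [Int.lt_floor_add_one t]
    have h1 : |deriv F (t - ⌊t⌋) - deriv F t₀| ≤ M * |(t - ⌊t⌋) - t₀| := hLip _ _
    have h2 : |(t - ⌊t⌋) - t₀| ≤ 1 := by
      rw [abs_le]
      constructor
      · have := ht₀.2; have := hmem.1; linarith
      · have := ht₀.1; have := hmem.2; linarith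
    rw [hper, hFt₀] at h1
    calc |deriv F t - 1| ≤ M * |(t - ⌊t⌋) - t₀| := h1
      _ ≤ M * 1 := mul_le_mul_of_nonneg_left h2 hM0
      _ = M := mul_one M
  have hlo : ∀ t : ℝ, (1:ℝ)/2 ≤ deriv F t := fun t => by
    have := (abs_le.mp (hFhalf t)).1; linarith
  have hhi : ∀ t : ℝ, deriv F t ≤ 3/2 := fun t => by
    have := (abs_le.mp (hFhalf t)).2; linarith
  -- probability measure instances
  haveI : IsProbabilityMeasure (volume : Measure (AddCircle (1:ℝ))) :=
    ⟨by rw [AddCircle.measure_univ]; norm_num⟩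
  -- the pointwise bound off the diagonal
  have hptwise : ∀ u v : AddCircle (1:ℝ), u ≠ v → |c (u, v)| ≤ 22 * M := by
    intro u v huv
    obtain ⟨x, rfl⟩ := QuotientAddGroup.mk_surjective u
    obtain ⟨z, rfl⟩ := QuotientAddGroup.mk_surjective v
    set w : ℝ := z - x with hw_def
    set y : ℝ := x + (w - round w) with hy_def
    have hyv : (y : AddCircle (1:ℝ)) = (z : AddCircle (1:ℝ)) := by
      rw [QuotientAddGroup.eq_iff_sub_mem]
      refine AddSubgroup.mem_zmultiples_iff.mpr ⟨-round w, ?_⟩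
      rw [zsmul_eq_mul]
      push_cast
      rw [hy_def, hw_def]
      ring
    rw [← hyv] at huv ⊢
    have hxy_ne : x ≠ y := fun h => huv (by rw [h])
    have hd12 : |y - x| ≤ 1/2 := by
      rw [hy_def]
      simpa using abs_sub_round w
    have hdist_uv : dist (x : AddCircle (1:ℝ)) (y : AddCircle (1:ℝ)) = |y - x| := by
      rw [dist_comm, dist_coe_addCircle]
      exact abs_sub_round_of_abs_le hd12
    rcases lt_trichotomy x y with hlt | heq | hgt
    · rw [hc x y huv]
      have hD : dist (f (x : AddCircle (1:ℝ))) (f (y : AddCircle (1:ℝ)))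
          = |(F y - F x) - round (F y - F x)| := by
        rw [hf x, hf y, dist_comm, dist_coe_addCircle]
      rw [hD, hdist_uv, abs_of_pos (by linarith : (0:ℝ) < y - x)]
      exact key_est F hM0 hdF hLip hone hlo hhi hlt (by rw [abs_of_pos (by linarith)] at hd12; linarith)
    · exact absurd (by rw [heq]) huv
    · rw [hc x y huv]
      have hD : dist (f (x : AddCircle (1:ℝ))) (f (y : AddCircle (1:ℝ)))
          = |(F x - F y) - round (F x - F y)| := by
        rw [hf x, hf y, dist_coe_addCircle]
      have habs : |y - x| = x - y := by
        rw [abs_of_neg (by linarith : y - x < 0)]; ring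
      rw [hD, hdist_uv, habs, mul_comm (deriv F x) (deriv F y)]
      exact key_est F hM0 hdF hLip hone hlo hhi hgt
        (by rw [habs] at hd12; linarith)
  -- diagonal is null
  have hdiag : (volume : Measure (AddCircle (1:ℝ) × AddCircle (1:ℝ))) {p | p.1 = p.2} = 0 := by
    have hd : MeasurableSet {p : AddCircle (1:ℝ) × AddCircle (1:ℝ) | p.1 = p.2} :=
      measurableSet_eq_fun measurable_fst measurable_snd
    have hpr : (volume : Measure (AddCircle (1:ℝ) × AddCircle (1:ℝ)))
        = (volume : Measure (AddCircle (1:ℝ))).prod volume := rfl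
    rw [hpr, Measure.prod_apply hd]
    have hsec : ∀ x : AddCircle (1:ℝ),
        (volume : Measure (AddCircle (1:ℝ)))
          (Prod.mk x ⁻¹' {p : AddCircle (1:ℝ) × AddCircle (1:ℝ) | p.1 = p.2}) = 0 := by
      intro x
      have h1 : (Prod.mk x ⁻¹' {p : AddCircle (1:ℝ) × AddCircle (1:ℝ) | p.1 = p.2}) = {x} := by
        ext y; simp [eq_comm]
      rw [h1]
      have := AddCircle.volume_closedBall (T := (1:ℝ)) (x := x) 0
      simpa using this
    simp only [hsec]
    simp
  have hae_ne : ∀ᵐ p : AddCircle (1:ℝ) × AddCircle (1:ℝ), p.1 ≠ p.2 := by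
    rw [ae_iff]
    convert hdiag using 2
    ext p
    simp
  -- a.e. bound on c
  have haec : ∀ᵐ p : AddCircle (1:ℝ) × AddCircle (1:ℝ), ‖c p‖ ≤ 22 * M := by
    filter_upwards [hae_ne] with p hp
    rw [Real.norm_eq_abs]
    have := hptwise p.1 p.2 hp
    simpa using this
  -- measurability of c
  have hcont_f : Continuous f := by
    rw [(QuotientAddGroup.isQuotientMap_mk _).continuous_iff]
    have : (f ∘ QuotientAddGroup.mk) = fun r : ℝ => ((F r : ℝ) : AddCircle (1:ℝ)) :=
      funext fun r => hf r
    rw [this]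
    exact (AddCircle.continuous_mk' 1).comp hF.continuous
  have hcont_phi : Continuous hperF'.lift := by
    rw [(QuotientAddGroup.isQuotientMap_mk _).continuous_iff]
    exact h1d.continuous
  have hg_meas : Measurable (fun p : AddCircle (1:ℝ) × AddCircle (1:ℝ) =>
      Real.sqrt (hperF'.lift p.1 * hperF'.lift p.2) / dist (f p.1) (f p.2)
        - 1 / dist p.1 p.2) := by
    apply Measurable.sub
    · exact (Real.continuous_sqrt.comp
        ((hcont_phi.comp continuous_fst).mul (hcont_phi.comp continuous_snd))).measurable.div
        ((continuous_dist.comp ((hcont_f.comp continuous_fst).prodMk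
          (hcont_f.comp continuous_snd))).measurable)
    · exact measurable_const.div continuous_dist.measurable
  have hgc : (fun p : AddCircle (1:ℝ) × AddCircle (1:ℝ) =>
      Real.sqrt (hperF'.lift p.1 * hperF'.lift p.2) / dist (f p.1) (f p.2)
        - 1 / dist p.1 p.2) =ᵐ[volume] c := by
    filter_upwards [hae_ne] with p hp
    obtain ⟨u, v⟩ := p
    obtain ⟨x, rfl⟩ := QuotientAddGroup.mk_surjective u
    obtain ⟨z, rfl⟩ := QuotientAddGroup.mk_surjective v
    simp only at hp
    rw [hc x z hp]
    rfl
  have hsm : AEStronglyMeasurable c (volume : Measure (AddCircle (1:ℝ) × AddCircle (1:ℝ))) :=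
    (hg_meas.stronglyMeasurable.aestronglyMeasurable).congr hgc
  constructor
  · exact MemLp.of_bound hsm (22 * M) haec
  · calc eLpNorm c 2 volume
        ≤ (volume : Measure (AddCircle (1:ℝ) × AddCircle (1:ℝ))) Set.univ ^ (2 : ENNReal).toReal⁻¹
          * ENNReal.ofReal (22 * M) := eLpNorm_le_of_ae_bound haec
      _ = ENNReal.ofReal (22 * M) := by
          rw [measure_univ]
          simp
end
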